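/- arXiv:2212.13808 — 6 statements merged into one kernel-verified Lean document; each statement's English description precedes it below -/
import Mathlib

section
/- Let L ∈ ℝ, let m ≥ 1 be an integer, and let v : (−∞, L) × ℝ → ℝ^m be smooth and 2π-periodic in the second variable θ, with finite energy ∫_{−∞}^{L} ∫_0^{2π} |∇v|² dθ dt < ∞. Suppose that at every point Δv := ∂_t²v + ∂_θ²v is orthogonal in ℝ^m to both ∂_t v and ∂_θ v. Then for every t < L one has ∫_0^{2π} |∂_t v(t,θ)|² dθ = ∫_0^{2π} |∂_θ v(t,θ)|² dθ and ∫_0^{2π} ⟨∂_t v(t,θ), ∂_θ v(t,θ)⟩ dθ = 0. -/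
open MeasureTheory Real

/-- Partial derivative in the first (cylinder) variable `t`. -/
noncomputable def ptder {E : Type*} [NormedAddCommGroup E] [NormedSpace ℝ E]
    (φ : ℝ → ℝ → E) (t θ : ℝ) : E := deriv (fun s => φ s θ) t

/-- Partial derivative in the second (circle) variable `θ`. -/
noncomputable def pthder {E : Type*} [NormedAddCommGroup E] [NormedSpace ℝ E]
    (φ : ℝ → ℝ → E) (t θ : ℝ) : E := deriv (fun θ' => φ t θ') θ

/-- The flat Laplacian `Δv = ∂_t²v + ∂_θ²v` on the cylinder. -/
noncomputable def cylLap {E : Type*} [NormedAddCommGroup E] [NormedSpace ℝ E]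
    (φ : ℝ → ℝ → E) (t θ : ℝ) : E := ptder (ptder φ) t θ + pthder (pthder φ) t θ

section aux
variable {E : Type*} [NormedAddCommGroup E] [NormedSpace ℝ E]

lemma lineDeriv_fst {f : ℝ × ℝ → E} {t θ : ℝ} (hf : DifferentiableAt ℝ f (t, θ)) :
    HasDerivAt (fun s => f (s, θ)) (fderiv ℝ f (t, θ) (1, 0)) t := by
  have h1 : HasDerivAt (fun s : ℝ => (s, θ)) ((1 : ℝ), (0 : ℝ)) t :=
    (hasDerivAt_id t).prodMk (hasDerivAt_const t θ)
  exact hf.hasFDerivAt.comp_hasDerivAt t h1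

lemma lineDeriv_snd {f : ℝ × ℝ → E} {t θ : ℝ} (hf : DifferentiableAt ℝ f (t, θ)) :
    HasDerivAt (fun θ' => f (t, θ')) (fderiv ℝ f (t, θ) (0, 1)) θ := by
  have h1 : HasDerivAt (fun θ' : ℝ => (t, θ')) ((0 : ℝ), (1 : ℝ)) θ :=
    (hasDerivAt_const θ t).prodMk (hasDerivAt_id θ)
  exact hf.hasFDerivAt.comp_hasDerivAt θ h1

lemma lineDeriv_fst_clm {g : ℝ × ℝ → (ℝ × ℝ) →L[ℝ] E} {t θ : ℝ}
    (hg : DifferentiableAt ℝ g (t, θ)) (w : ℝ × ℝ) :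
    HasDerivAt (fun s => g (s, θ) w) (fderiv ℝ g (t, θ) (1, 0) w) t := by
  simpa using (lineDeriv_fst hg).clm_apply (hasDerivAt_const t w)

lemma lineDeriv_snd_clm {g : ℝ × ℝ → (ℝ × ℝ) →L[ℝ] E} {t θ : ℝ}
    (hg : DifferentiableAt ℝ g (t, θ)) (w : ℝ × ℝ) :
    HasDerivAt (fun θ' => g (t, θ') w) (fderiv ℝ g (t, θ) (0, 1) w) θ := by
  simpa using (lineDeriv_snd hg).clm_apply (hasDerivAt_const θ w)

/-- constancy from vanishing derivative on `Iio L` -/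
lemma const_of_hasDerivAt_zero {f : ℝ → ℝ} {L : ℝ} (h : ∀ t < L, HasDerivAt f 0 t)
    {s t : ℝ} (hs : s < L) (ht : t < L) : f s = f t := by
  have hd : DifferentiableOn ℝ f (Set.Iio L) := fun x hx =>
    (h x hx).differentiableAt.differentiableWithinAt
  refine (convex_Iio L).is_const_of_fderivWithin_eq_zero hd (fun x hx => ?_) hs ht
  rw [fderivWithin_of_isOpen isOpen_Iio hx]
  have hfd : HasFDerivAt f ((1 : ℝ →L[ℝ] ℝ).smulRight (0:ℝ)) x := h x hx
  rw [hfd.fderiv]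
  ext y
  simp

end aux


open intervalIntegral in
lemma param_deriv {L : ℝ} {W DW : ℝ × ℝ → ℝ}
    (hWc : ContinuousOn W {p : ℝ × ℝ | p.1 < L})
    (hDWc : ContinuousOn DW {p : ℝ × ℝ | p.1 < L})
    (hder : ∀ x θ : ℝ, x < L → HasDerivAt (fun s => W (s, θ)) (DW (x, θ)) x)
    {t : ℝ} (ht : t < L) :
    HasDerivAt (fun x => ∫ θ in (0:ℝ)..(2*π), W (x, θ))
      (∫ θ in (0:ℝ)..(2*π), DW (t, θ)) t := by
  set ε := (L - t)/2 with hε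
  have hεpos : 0 < ε := by rw [hε]; linarith
  have hsub : ∀ x ∈ Metric.ball t ε, x < L := by
    intro x hx
    rw [Real.ball_eq_Ioo] at hx
    have := hx.2
    rw [hε] at this
    linarith
  have hK : IsCompact ((Set.Icc (t-ε) (t+ε)) ×ˢ (Set.uIcc (0:ℝ) (2*π))) :=
    isCompact_Icc.prod isCompact_uIcc
  have hKU : (Set.Icc (t-ε) (t+ε)) ×ˢ (Set.uIcc (0:ℝ) (2*π)) ⊆ {p : ℝ × ℝ | p.1 < L} := by
    have htε : t + ε < L := by rw [hε]; linarith
    rintro ⟨x, y⟩ ⟨hx, _⟩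
    simp only [Set.mem_setOf_eq]
    exact lt_of_le_of_lt hx.2 htε
  obtain ⟨M, hM⟩ := hK.exists_bound_of_continuousOn (hDWc.mono hKU)
  have line_cont : ∀ x : ℝ, x < L → Continuous (fun θ => W (x, θ)) := fun x hx =>
    hWc.comp_continuous (by fun_prop) fun θ => hx
  have line_contD : Continuous (fun θ => DW (t, θ)) :=
    hDWc.comp_continuous (by fun_prop) fun θ => ht
  refine (intervalIntegral.hasDerivAt_integral_of_dominated_loc_of_deriv_le
    (F := fun x θ => W (x, θ)) (F' := fun x θ => DW (x, θ)) (bound := fun _ => M)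
    (Metric.ball_mem_nhds t hεpos) ?_ ?_ ?_ ?_ ?_ ?_).2
  · filter_upwards [Iio_mem_nhds ht] with x hx
    exact (line_cont x hx).aestronglyMeasurable
  · exact (line_cont t ht).intervalIntegrable _ _
  · exact line_contD.aestronglyMeasurable
  · refine Filter.Eventually.of_forall fun θ hθ x hx => ?_
    refine hM (x, θ) ⟨?_, Set.Ioc_subset_Icc_self hθ⟩
    rw [Real.ball_eq_Ioo] at hx
    exact ⟨le_of_lt hx.1, le_of_lt hx.2⟩
  · exact intervalIntegrable_const
  · exact Filter.Eventually.of_forall fun θ hθ x hx => hder x θ (hsub x hx)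


section main
variable {E : Type*} [NormedAddCommGroup E] [InnerProductSpace ℝ E]

set_option maxHeartbeats 1000000 in
theorem main_general (L : ℝ) (v : ℝ → ℝ → E)
    (hsmooth : ContDiffOn ℝ (⊤ : ℕ∞) (fun p : ℝ × ℝ => v p.1 p.2) {p : ℝ × ℝ | p.1 < L})
    (hper : ∀ t θ : ℝ, t < L → v t (θ + 2 * π) = v t θ)
    (horth : ∀ t θ : ℝ, t < L →
      (inner ℝ (cylLap v t θ) (ptder v t θ) : ℝ) = 0 ∧
      (inner ℝ (cylLap v t θ) (pthder v t θ) : ℝ) = 0)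
    (hfin : IntegrableOn
      (fun p : ℝ × ℝ => ‖ptder v p.1 p.2‖ ^ 2 + ‖pthder v p.1 p.2‖ ^ 2)
      (Set.Iio L ×ˢ Set.Ioc 0 (2 * π)) volume) :
    ∀ t : ℝ, t < L →
      (∫ θ in (0:ℝ)..(2 * π), ‖ptder v t θ‖ ^ 2)
          = (∫ θ in (0:ℝ)..(2 * π), ‖pthder v t θ‖ ^ 2) ∧
      (∫ θ in (0:ℝ)..(2 * π), (inner ℝ (ptder v t θ) (pthder v t θ) : ℝ)) = 0 := by
  have hU : IsOpen {p : ℝ × ℝ | p.1 < L} := isOpen_lt continuous_fst continuous_const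
  have hFca : ∀ {t θ : ℝ}, t < L →
      ContDiffAt ℝ (⊤ : ℕ∞) (fun p : ℝ × ℝ => v p.1 p.2) (t, θ) :=
    fun h => hsmooth.contDiffAt (hU.mem_nhds h)
  set f₁ : ℝ × ℝ → (ℝ × ℝ) →L[ℝ] E := fderiv ℝ (fun p : ℝ × ℝ => v p.1 p.2) with hf₁
  set f₂ : ℝ × ℝ → (ℝ × ℝ) →L[ℝ] ((ℝ × ℝ) →L[ℝ] E) := fderiv ℝ f₁ with hf₂
  -- first derivatives
  have hdva : ∀ t θ : ℝ, t < L →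
      HasDerivAt (fun s => v s θ) (f₁ (t, θ) (1, 0)) t := by
    intro t θ h
    exact lineDeriv_fst ((hFca h).differentiableAt (by simp))
  have hdvb : ∀ t θ : ℝ, t < L →
      HasDerivAt (fun θ' => v t θ') (f₁ (t, θ) (0, 1)) θ := by
    intro t θ h
    exact lineDeriv_snd ((hFca h).differentiableAt (by simp))
  have haeq : ∀ t θ : ℝ, t < L → ptder v t θ = f₁ (t, θ) (1, 0) := by
    intro t θ h; exact (hdva t θ h).deriv
  have hbeq : ∀ t θ : ℝ, t < L → pthder v t θ = f₁ (t, θ) (0, 1) := by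
    intro t θ h; exact (hdvb t θ h).deriv
  -- differentiability of f₁
  have hf₁d : ∀ {t θ : ℝ}, t < L → DifferentiableAt ℝ f₁ (t, θ) := by
    intro t θ h
    exact ((hFca h).fderiv_right (m := 1) (by exact WithTop.coe_le_coe.2 le_top)).differentiableAt (by simp)
  -- second derivatives
  have hdA : ∀ t θ : ℝ, t < L →
      HasDerivAt (fun s => ptder v s θ) (f₂ (t, θ) (1, 0) (1, 0)) t := by
    intro t θ h
    refine (lineDeriv_fst_clm (hf₁d h) (1, 0)).congr_of_eventuallyEq ?_
    filter_upwards [Iio_mem_nhds h] with s hs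
    exact haeq s θ hs
  have hdC : ∀ t θ : ℝ, t < L →
      HasDerivAt (fun θ' => pthder v t θ') (f₂ (t, θ) (0, 1) (0, 1)) θ := by
    intro t θ h
    refine (lineDeriv_snd_clm (hf₁d h) (0, 1)).congr_of_eventuallyEq ?_
    exact Filter.Eventually.of_forall fun θ' => hbeq t θ' h
  have hAeq : ∀ t θ : ℝ, t < L → ptder (ptder v) t θ = f₂ (t, θ) (1, 0) (1, 0) :=
    fun t θ h => (hdA t θ h).deriv
  have hCeq : ∀ t θ : ℝ, t < L → pthder (pthder v) t θ = f₂ (t, θ) (0, 1) (0, 1) :=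
    fun t θ h => (hdC t θ h).deriv
  -- symmetry of second derivative
  have hsymm : ∀ t θ : ℝ, t < L → f₂ (t, θ) (1, 0) (0, 1) = f₂ (t, θ) (0, 1) (1, 0) := by
    intro t θ h
    exact ((hFca h).isSymmSndFDerivAt (by rw [minSmoothness_of_isRCLikeNormedField]; exact WithTop.coe_le_coe.2 le_top)).eq (1, 0) (0, 1)
  -- orthogonality in f₁/f₂ terms
  have horth₁ : ∀ t θ : ℝ, t < L →
      (inner ℝ (f₂ (t,θ) (1,0) (1,0) + f₂ (t,θ) (0,1) (0,1)) (f₁ (t,θ) (1,0)) : ℝ) = 0 := by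
    intro t θ h
    have := (horth t θ h).1
    rwa [cylLap, hAeq t θ h, hCeq t θ h, haeq t θ h] at this
  have horth₂ : ∀ t θ : ℝ, t < L →
      (inner ℝ (f₂ (t,θ) (1,0) (1,0) + f₂ (t,θ) (0,1) (0,1)) (f₁ (t,θ) (0,1)) : ℝ) = 0 := by
    intro t θ h
    have := (horth t θ h).2
    rwa [cylLap, hAeq t θ h, hCeq t θ h, hbeq t θ h] at this
  -- periodicity of f₁
  have hperf₁ : ∀ t θ : ℝ, t < L → f₁ (t, θ + 2*π) = f₁ (t, θ) := by
    intro t θ h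
    have hτ : HasFDerivAt (fun p : ℝ × ℝ => p + ((0:ℝ), 2*π))
        (ContinuousLinearMap.id ℝ (ℝ × ℝ)) (t, θ) := (hasFDerivAt_id _).add_const _
    have hF2 : HasFDerivAt (fun p : ℝ × ℝ => v p.1 p.2) (f₁ (t, θ + 2*π)) (t, θ + 2*π) :=
      ((hFca h).differentiableAt (by simp)).hasFDerivAt
    have hpt : ((t : ℝ), θ + 2*π) = (t, θ) + ((0:ℝ), 2*π) := by
      simp [Prod.ext_iff]
    rw [hpt] at hF2
    have hcomp := hF2.comp (t, θ) hτ
    have heq : (fun p : ℝ × ℝ => v p.1 p.2)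
        =ᶠ[nhds ((t : ℝ), θ)] ((fun p : ℝ × ℝ => v p.1 p.2) ∘ (fun p => p + ((0:ℝ), 2*π))) := by
      filter_upwards [hU.mem_nhds h] with q hq
      simp only [Function.comp, Prod.fst_add, Prod.snd_add, add_zero]
      exact (hper q.1 q.2 hq).symm
    have hcomp' := hcomp.congr_of_eventuallyEq heq
    have := hcomp'.fderiv
    rw [← hf₁] at this
    rw [this, ← hpt, ContinuousLinearMap.comp_id]
  have hper_a : ∀ t : ℝ, t < L → f₁ (t, 2*π) = f₁ (t, 0) := by
    intro t h
    have := hperf₁ t 0 h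
    rwa [zero_add] at this
  -- continuity
  have hf₁c : ContinuousOn f₁ {p : ℝ × ℝ | p.1 < L} :=
    hsmooth.continuousOn_fderiv_of_isOpen hU (by simp)
  have hf₂c : ContinuousOn f₂ {p : ℝ × ℝ | p.1 < L} :=
    (hsmooth.fderiv_of_isOpen hU (m := ((⊤ : ℕ∞) : WithTop ℕ∞)) (by exact_mod_cast (le_top : (⊤ : ℕ∞) + 1 ≤ ⊤))).continuousOn_fderiv_of_isOpen hU (by exact_mod_cast (le_top : (1 : ℕ∞) ≤ ⊤))
  have hac : ContinuousOn (fun p : ℝ × ℝ => f₁ p (1, 0)) {p : ℝ × ℝ | p.1 < L} :=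
    hf₁c.clm_apply continuousOn_const
  have hbc : ContinuousOn (fun p : ℝ × ℝ => f₁ p (0, 1)) {p : ℝ × ℝ | p.1 < L} :=
    hf₁c.clm_apply continuousOn_const
  have hAc : ContinuousOn (fun p : ℝ × ℝ => f₂ p (1, 0) (1, 0)) {p : ℝ × ℝ | p.1 < L} :=
    (hf₂c.clm_apply continuousOn_const).clm_apply continuousOn_const
  have hBc : ContinuousOn (fun p : ℝ × ℝ => f₂ p (1, 0) (0, 1)) {p : ℝ × ℝ | p.1 < L} :=
    (hf₂c.clm_apply continuousOn_const).clm_apply continuousOn_const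
  -- the two integrands and their t-derivatives
  set Pint : ℝ × ℝ → ℝ := fun p =>
    (inner ℝ (f₁ p (1,0)) (f₁ p (1,0)) : ℝ) - (inner ℝ (f₁ p (0,1)) (f₁ p (0,1)) : ℝ) with hPint
  set Qint : ℝ × ℝ → ℝ := fun p => (inner ℝ (f₁ p (1,0)) (f₁ p (0,1)) : ℝ) with hQint
  set DP : ℝ × ℝ → ℝ := fun p =>
    ((inner ℝ (f₁ p (1,0)) (f₂ p (1,0) (1,0)) : ℝ) + (inner ℝ (f₂ p (1,0) (1,0)) (f₁ p (1,0)) : ℝ))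
    - ((inner ℝ (f₁ p (0,1)) (f₂ p (1,0) (0,1)) : ℝ)
        + (inner ℝ (f₂ p (1,0) (0,1)) (f₁ p (0,1)) : ℝ)) with hDP
  set DQ : ℝ × ℝ → ℝ := fun p =>
    (inner ℝ (f₁ p (1,0)) (f₂ p (1,0) (0,1)) : ℝ)
      + (inner ℝ (f₂ p (1,0) (1,0)) (f₁ p (0,1)) : ℝ) with hDQ
  have hPc : ContinuousOn Pint {p : ℝ × ℝ | p.1 < L} := (hac.inner hac).sub (hbc.inner hbc)
  have hQc : ContinuousOn Qint {p : ℝ × ℝ | p.1 < L} := hac.inner hbc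
  have hDPc : ContinuousOn DP {p : ℝ × ℝ | p.1 < L} :=
    ((hac.inner hAc).add (hAc.inner hac)).sub ((hbc.inner hBc).add (hBc.inner hbc))
  have hDQc : ContinuousOn DQ {p : ℝ × ℝ | p.1 < L} := (hac.inner hBc).add (hAc.inner hbc)
  -- pointwise parameter derivatives of the integrands
  have hPder : ∀ x θ : ℝ, x < L → HasDerivAt (fun s => Pint (s, θ)) (DP (x, θ)) x := by
    intro x θ h
    have h1 : HasDerivAt (fun s => f₁ (s, θ) (1,0)) (f₂ (x, θ) (1,0) (1,0)) x :=
      lineDeriv_fst_clm (hf₁d h) (1,0)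
    have h2 : HasDerivAt (fun s => f₁ (s, θ) (0,1)) (f₂ (x, θ) (1,0) (0,1)) x :=
      lineDeriv_fst_clm (hf₁d h) (0,1)
    exact (h1.inner ℝ h1).sub (h2.inner ℝ h2)
  have hQder : ∀ x θ : ℝ, x < L → HasDerivAt (fun s => Qint (s, θ)) (DQ (x, θ)) x := by
    intro x θ h
    have h1 : HasDerivAt (fun s => f₁ (s, θ) (1,0)) (f₂ (x, θ) (1,0) (1,0)) x :=
      lineDeriv_fst_clm (hf₁d h) (1,0)
    have h2 : HasDerivAt (fun s => f₁ (s, θ) (0,1)) (f₂ (x, θ) (1,0) (0,1)) x :=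
      lineDeriv_fst_clm (hf₁d h) (0,1)
    exact h1.inner ℝ h2
  -- the circle integrals of DP and DQ vanish (FTC + periodicity)
  have hDP0 : ∀ t : ℝ, t < L → (∫ θ in (0:ℝ)..(2*π), DP (t, θ)) = 0 := by
    intro t h
    have hG : ∀ θ : ℝ, HasDerivAt
        (fun θ' => (-2 : ℝ) * (inner ℝ (f₁ (t,θ') (0,1)) (f₁ (t,θ') (1,0)) : ℝ))
        (DP (t, θ)) θ := by
      intro θ
      have h1 : HasDerivAt (fun θ' => f₁ (t, θ') (0,1)) (f₂ (t, θ) (0,1) (0,1)) θ :=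
        lineDeriv_snd_clm (hf₁d h) (0,1)
      have h2 : HasDerivAt (fun θ' => f₁ (t, θ') (1,0)) (f₂ (t, θ) (0,1) (1,0)) θ :=
        lineDeriv_snd_clm (hf₁d h) (1,0)
      have h3 := (h1.inner ℝ h2).const_mul (-2 : ℝ)
      refine h3.congr_deriv ?_
      have hsy := hsymm t θ h
      have hoa := horth₁ t θ h
      rw [inner_add_left] at hoa
      rw [← hsy]
      have e1 := real_inner_comm (f₁ (t,θ) (1,0)) (f₂ (t,θ) (1,0) (1,0))
      have e2 := real_inner_comm (f₁ (t,θ) (0,1)) (f₂ (t,θ) (1,0) (0,1))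
      have e3 := real_inner_comm (f₁ (t,θ) (1,0)) (f₂ (t,θ) (0,1) (0,1))
      simp only [hDP]
      linarith
    have hcont : Continuous (fun θ => DP (t, θ)) := by
      refine hDPc.comp_continuous (by fun_prop) fun θ => h
    rw [intervalIntegral.integral_eq_sub_of_hasDerivAt (fun θ _ => hG θ)
      (hcont.intervalIntegrable _ _)]
    rw [hper_a t h]
    ring
  have hDQ0 : ∀ t : ℝ, t < L → (∫ θ in (0:ℝ)..(2*π), DQ (t, θ)) = 0 := by
    intro t h
    have hG : ∀ θ : ℝ, HasDerivAt
        (fun θ' => ((inner ℝ (f₁ (t,θ') (1,0)) (f₁ (t,θ') (1,0)) : ℝ)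
          - (inner ℝ (f₁ (t,θ') (0,1)) (f₁ (t,θ') (0,1)) : ℝ)) / 2)
        (DQ (t, θ)) θ := by
      intro θ
      have h1 : HasDerivAt (fun θ' => f₁ (t, θ') (0,1)) (f₂ (t, θ) (0,1) (0,1)) θ :=
        lineDeriv_snd_clm (hf₁d h) (0,1)
      have h2 : HasDerivAt (fun θ' => f₁ (t, θ') (1,0)) (f₂ (t, θ) (0,1) (1,0)) θ :=
        lineDeriv_snd_clm (hf₁d h) (1,0)
      have h3 := ((h2.inner ℝ h2).sub (h1.inner ℝ h1)).div_const (2 : ℝ)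
      refine h3.congr_deriv ?_
      have hsy := hsymm t θ h
      have hob := horth₂ t θ h
      rw [inner_add_left] at hob
      rw [← hsy]
      have e1 := real_inner_comm (f₁ (t,θ) (1,0)) (f₂ (t,θ) (1,0) (0,1))
      have e2 := real_inner_comm (f₁ (t,θ) (0,1)) (f₂ (t,θ) (0,1) (0,1))
      have e3 := real_inner_comm (f₁ (t,θ) (0,1)) (f₂ (t,θ) (1,0) (1,0))
      simp only [hDQ]
      linarith
    have hcont : Continuous (fun θ => DQ (t, θ)) := by
      refine hDQc.comp_continuous (by fun_prop) fun θ => h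
    rw [intervalIntegral.integral_eq_sub_of_hasDerivAt (fun θ _ => hG θ)
      (hcont.intervalIntegrable _ _)]
    rw [hper_a t h]
    ring
  -- Part IV: the circle averages are constant in t
  have hPd0 : ∀ t : ℝ, t < L → HasDerivAt (fun x => ∫ θ in (0:ℝ)..(2*π), Pint (x, θ)) 0 t := by
    intro t h
    have := param_deriv hPc hDPc hPder h
    rwa [hDP0 t h] at this
  have hQd0 : ∀ t : ℝ, t < L → HasDerivAt (fun x => ∫ θ in (0:ℝ)..(2*π), Qint (x, θ)) 0 t := by
    intro t h
    have := param_deriv hQc hDQc hQder h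
    rwa [hDQ0 t h] at this
  -- Part V: the constants vanish thanks to finite energy
  have h2pi : (0:ℝ) ≤ 2*π := by positivity
  have line_cont : ∀ t : ℝ, t < L → Continuous (fun θ => f₁ (t, θ)) := fun t h =>
    hf₁c.comp_continuous (by fun_prop) fun θ => h
  have hgint : IntegrableOn
      (fun x => ∫ θ in (0:ℝ)..(2*π), (‖ptder v x θ‖^2 + ‖pthder v x θ‖^2))
      (Set.Iio L) volume := by
    have hfin2 := hfin
    rw [IntegrableOn, Measure.volume_eq_prod, ← Measure.prod_restrict] at hfin2
    have := hfin2.integral_prod_left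
    refine this.congr (Filter.Eventually.of_forall fun x => ?_)
    simp only
    rw [intervalIntegral.integral_of_le h2pi]
  have hbound : ∀ (Gfun : ℝ → ℝ), (∀ t : ℝ, t < L → HasDerivAt Gfun 0 t) →
      (∀ t : ℝ, t < L → |Gfun t| ≤ ∫ θ in (0:ℝ)..(2*π), (‖ptder v t θ‖^2 + ‖pthder v t θ‖^2)) →
      ∀ t : ℝ, t < L → Gfun t = 0 := by
    intro Gfun hdz hb t ht
    have hconst : ∀ s : ℝ, s < L → Gfun s = Gfun t := fun s hs =>
      const_of_hasDerivAt_zero hdz hs ht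
    have hk : Integrable (fun _ : ℝ => |Gfun t|) (volume.restrict (Set.Iio L)) := by
      refine Integrable.mono' hgint aestronglyMeasurable_const ?_
      rw [ae_restrict_iff' measurableSet_Iio]
      refine Filter.Eventually.of_forall fun s hs => ?_
      rw [Real.norm_eq_abs, abs_abs]
      rw [← hconst s hs]
      exact hb s hs
    rcases (integrable_const_iff).1 hk with h0 | hfin'
    · exact abs_eq_zero.1 h0
    · exfalso
      rw [isFiniteMeasure_restrict, Real.volume_Iio] at hfin'
      exact hfin' rfl
  refine fun t ht => ?_
  -- integrability of the pieces on the circle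
  have hia : IntervalIntegrable (fun θ => ‖f₁ (t, θ) (1,0)‖^2) volume 0 (2*π) := by
    have : Continuous (fun θ => f₁ (t, θ) (1,0)) :=
      hac.comp_continuous (by fun_prop) fun θ => ht
    exact (this.norm.pow 2).intervalIntegrable _ _
  have hib : IntervalIntegrable (fun θ => ‖f₁ (t, θ) (0,1)‖^2) volume 0 (2*π) := by
    have : Continuous (fun θ => f₁ (t, θ) (0,1)) :=
      hbc.comp_continuous (by fun_prop) fun θ => ht
    exact (this.norm.pow 2).intervalIntegrable _ _
  -- identify the target integrals
  have e1 : (∫ θ in (0:ℝ)..(2*π), ‖ptder v t θ‖^2)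
      = ∫ θ in (0:ℝ)..(2*π), ‖f₁ (t, θ) (1,0)‖^2 :=
    intervalIntegral.integral_congr fun θ _ => by rw [haeq t θ ht]
  have e2 : (∫ θ in (0:ℝ)..(2*π), ‖pthder v t θ‖^2)
      = ∫ θ in (0:ℝ)..(2*π), ‖f₁ (t, θ) (0,1)‖^2 :=
    intervalIntegral.integral_congr fun θ _ => by rw [hbeq t θ ht]
  have e3 : (∫ θ in (0:ℝ)..(2*π), (inner ℝ (ptder v t θ) (pthder v t θ) : ℝ))
      = ∫ θ in (0:ℝ)..(2*π), Qint (t, θ) :=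
    intervalIntegral.integral_congr fun θ _ => by
      rw [hQint, haeq t θ ht, hbeq t θ ht]
  have esum : ∀ s : ℝ, s < L → (∫ θ in (0:ℝ)..(2*π), (‖ptder v s θ‖^2 + ‖pthder v s θ‖^2))
      = ∫ θ in (0:ℝ)..(2*π), (‖f₁ (s, θ) (1,0)‖^2 + ‖f₁ (s, θ) (0,1)‖^2) := fun s hs =>
    intervalIntegral.integral_congr fun θ _ => by rw [haeq s θ hs, hbeq s θ hs]
  -- bounds on |P| and |Q|
  have hPbound : ∀ s : ℝ, s < L → |∫ θ in (0:ℝ)..(2*π), Pint (s, θ)|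
      ≤ ∫ θ in (0:ℝ)..(2*π), (‖ptder v s θ‖^2 + ‖pthder v s θ‖^2) := by
    intro s hs
    rw [esum s hs]
    have hic : Continuous (fun θ => Pint (s, θ)) :=
      hPc.comp_continuous (by fun_prop) fun θ => hs
    refine le_trans (intervalIntegral.abs_integral_le_integral_abs h2pi) ?_
    refine intervalIntegral.integral_mono_on h2pi
      (hic.abs.intervalIntegrable _ _) ?_ fun θ _ => ?_
    · have h1 : Continuous (fun θ => f₁ (s, θ) (1,0)) :=
        hac.comp_continuous (by fun_prop) fun θ => hs
      have h2 : Continuous (fun θ => f₁ (s, θ) (0,1)) :=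
        hbc.comp_continuous (by fun_prop) fun θ => hs
      exact ((h1.norm.pow 2).add (h2.norm.pow 2)).intervalIntegrable _ _
    · rw [hPint]
      simp only [real_inner_self_eq_norm_sq]
      rw [abs_le]
      constructor <;> nlinarith [sq_nonneg ‖f₁ (s, θ) (1,0)‖, sq_nonneg ‖f₁ (s, θ) (0,1)‖]
  have hQbound : ∀ s : ℝ, s < L → |∫ θ in (0:ℝ)..(2*π), Qint (s, θ)|
      ≤ ∫ θ in (0:ℝ)..(2*π), (‖ptder v s θ‖^2 + ‖pthder v s θ‖^2) := by
    intro s hs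
    rw [esum s hs]
    have hic : Continuous (fun θ => Qint (s, θ)) :=
      hQc.comp_continuous (by fun_prop) fun θ => hs
    refine le_trans (intervalIntegral.abs_integral_le_integral_abs h2pi) ?_
    refine intervalIntegral.integral_mono_on h2pi
      (hic.abs.intervalIntegrable _ _) ?_ fun θ _ => ?_
    · have h1 : Continuous (fun θ => f₁ (s, θ) (1,0)) :=
        hac.comp_continuous (by fun_prop) fun θ => hs
      have h2 : Continuous (fun θ => f₁ (s, θ) (0,1)) :=
        hbc.comp_continuous (by fun_prop) fun θ => hs
      exact ((h1.norm.pow 2).add (h2.norm.pow 2)).intervalIntegrable _ _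
    · rw [hQint]
      have hcs := abs_real_inner_le_norm (f₁ (s, θ) (1,0)) (f₁ (s, θ) (0,1))
      refine le_trans hcs ?_
      nlinarith [sq_nonneg (‖f₁ (s, θ) (1,0)‖ - ‖f₁ (s, θ) (0,1)‖),
        norm_nonneg (f₁ (s, θ) (1,0)), norm_nonneg (f₁ (s, θ) (0,1))]
  have hP0 := hbound _ hPd0 hPbound t ht
  have hQ0 := hbound _ hQd0 hQbound t ht
  constructor
  · rw [e1, e2]
    have hsplit : (∫ θ in (0:ℝ)..(2*π), Pint (t, θ))
        = (∫ θ in (0:ℝ)..(2*π), ‖f₁ (t, θ) (1,0)‖^2)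
          - ∫ θ in (0:ℝ)..(2*π), ‖f₁ (t, θ) (0,1)‖^2 := by
      rw [← intervalIntegral.integral_sub hia hib]
      refine intervalIntegral.integral_congr fun θ _ => ?_
      rw [hPint]
      simp [real_inner_self_eq_norm_sq]
    rw [hsplit] at hP0
    linarith
  · rw [e3, hQ0]

end main

/-- Identity (eq.holomorphichopf): for a finite-energy map on the half-infinite cylinder
whose Laplacian is pointwise orthogonal to both partial derivatives, the Hopf differential
has vanishing circle averages. -/
theorem hopf_differential_circle_identities
    (L : ℝ) (m : ℕ) (hm : 1 ≤ m) (v : ℝ → ℝ → EuclideanSpace ℝ (Fin m))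
    (hsmooth : ContDiffOn ℝ (⊤ : ℕ∞) (fun p : ℝ × ℝ => v p.1 p.2) {p : ℝ × ℝ | p.1 < L})
    (hper : ∀ t θ : ℝ, t < L → v t (θ + 2 * π) = v t θ)
    (horth : ∀ t θ : ℝ, t < L →
      (inner ℝ (cylLap v t θ) (ptder v t θ) : ℝ) = 0 ∧
      (inner ℝ (cylLap v t θ) (pthder v t θ) : ℝ) = 0)
    (hfin : IntegrableOn
      (fun p : ℝ × ℝ => ‖ptder v p.1 p.2‖ ^ 2 + ‖pthder v p.1 p.2‖ ^ 2)
      (Set.Iio L ×ˢ Set.Ioc 0 (2 * π)) volume) :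
    ∀ t : ℝ, t < L →
      (∫ θ in (0:ℝ)..(2 * π), ‖ptder v t θ‖ ^ 2)
          = (∫ θ in (0:ℝ)..(2 * π), ‖pthder v t θ‖ ^ 2) ∧
      (∫ θ in (0:ℝ)..(2 * π), (inner ℝ (ptder v t θ) (pthder v t θ) : ℝ)) = 0 := by
  exact main_general L v hsmooth hper horth hfin
end

section
/- Let n ≥ 1 be an integer, let 0 < δ ≤ 1, and let ψ : [0,δ] × ℝ → ℝⁿ be smooth and 2π-periodic in the second variable θ, with vanishing mean on the left boundary circle: ∫_0^{2π} ψ(0,θ) dθ = 0. Then | ∫_0^{2π} ⟨ψ(δ,θ), ∂_tψ(δ,θ)⟩ dθ | ≤ 3 ∫_0^{2π} ( |∂_tψ(δ,θ)|² + |∂_θψ(δ,θ)|² ) dθ + (1/3) ∫_0^δ ∫_0^{2π} ( |∂_tψ|² + |∂_θψ|² ) dθ dt. -/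
open MeasureTheory Real

section Helpers

open intervalIntegral

/-- Cauchy–Schwarz for a finite measure: `(∫ f)² ≤ μ(univ) ∫ f²`. -/
lemma BE_cs_meas {α : Type*} [MeasurableSpace α] (μ : Measure α) [IsFiniteMeasure μ] {f : α → ℝ}
    (hf : Integrable f μ) (hf2 : Integrable (fun x => f x ^ 2) μ) :
    (∫ x, f x ∂μ) ^ 2 ≤ (μ Set.univ).toReal * ∫ x, f x ^ 2 ∂μ := by
  set M := (μ Set.univ).toReal with hMdef
  have hM : 0 ≤ M := ENNReal.toReal_nonneg
  rcases eq_or_lt_of_le hM with h0 | h0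
  · have hμ : μ = 0 := by
      have h := h0.symm
      rw [hMdef, ENNReal.toReal_eq_zero_iff] at h
      rcases h with h | h
      · exact MeasureTheory.Measure.measure_univ_eq_zero.mp h
      · exact absurd h (measure_ne_top μ _)
    simp [hμ]
  · set A := ∫ x, f x ∂μ with hA
    set c := A / M with hc
    have key : 0 ≤ ∫ x, (f x - c) ^ 2 ∂μ := integral_nonneg fun x => sq_nonneg _
    have expand : ∫ x, (f x - c) ^ 2 ∂μ = (∫ x, f x ^ 2 ∂μ) - 2 * c * A + c ^ 2 * M := by
      have h1 : ∀ x, (f x - c) ^ 2 = f x ^ 2 - (2 * c) * f x + c ^ 2 := fun x => by ring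
      have i1 : Integrable (fun x => f x ^ 2 - 2 * c * f x) μ := hf2.sub (hf.const_mul _)
      rw [integral_congr_ae (Filter.Eventually.of_forall h1),
        integral_add i1 (integrable_const _),
        integral_sub hf2 (hf.const_mul _), MeasureTheory.integral_const_mul, MeasureTheory.integral_const]
      simp only [smul_eq_mul, measureReal_def, ← hMdef, ← hA]
      ring
    rw [expand] at key
    have hc' : c * M = A := by rw [hc, div_mul_cancel₀ A h0.ne']
    nlinarith [sq_nonneg (A - c * M)]

/-- Cauchy–Schwarz on an interval for vector-valued integrals. -/
lemma BE_norm_int_sq_le {E : Type*} [NormedAddCommGroup E] [NormedSpace ℝ E] [CompleteSpace E]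
    {a b : ℝ} (hab : a ≤ b) {g : ℝ → E} (hg : Continuous g) :
    ‖∫ x in a..b, g x‖ ^ 2 ≤ (b - a) * ∫ x in a..b, ‖g x‖ ^ 2 := by
  have h1 : ‖∫ x in a..b, g x‖ ≤ ∫ x in a..b, ‖g x‖ :=
    intervalIntegral.norm_integral_le_integral_norm hab
  have hN : 0 ≤ ∫ x in a..b, ‖g x‖ :=
    intervalIntegral.integral_nonneg hab fun x _ => norm_nonneg _
  have h2 : (∫ x in a..b, ‖g x‖) ^ 2 ≤ (b - a) * ∫ x in a..b, ‖g x‖ ^ 2 := by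
    rw [intervalIntegral.integral_of_le hab, intervalIntegral.integral_of_le hab]
    haveI : IsFiniteMeasure (volume.restrict (Set.Ioc a b)) := by
      constructor
      rw [Measure.restrict_apply_univ, Real.volume_Ioc]
      exact ENNReal.ofReal_lt_top
    have hcs := BE_cs_meas (volume.restrict (Set.Ioc a b)) (f := fun x => ‖g x‖)
      (hg.norm.integrableOn_Ioc) ((hg.norm.pow 2).integrableOn_Ioc)
    rwa [Measure.restrict_apply_univ, Real.volume_Ioc,
      ENNReal.toReal_ofReal (by linarith)] at hcs
  calc ‖∫ x in a..b, g x‖ ^ 2 ≤ (∫ x in a..b, ‖g x‖) ^ 2 := by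
        nlinarith [norm_nonneg (∫ x in a..b, g x)]
    _ ≤ (b - a) * ∫ x in a..b, ‖g x‖ ^ 2 := h2

/-- `∫₀ᴸ |θ - x| dx ≤ L²/2` for `θ ∈ [0, L]`. -/
lemma BE_int_abs_le {L θ : ℝ} (h0 : 0 ≤ θ) (hL : θ ≤ L) :
    (∫ x in (0:ℝ)..L, |θ - x|) ≤ L ^ 2 / 2 := by
  have i1 : IntervalIntegrable (fun x => |θ - x|) volume 0 θ :=
    (continuous_const.sub continuous_id).abs.intervalIntegrable _ _
  have i2 : IntervalIntegrable (fun x => |θ - x|) volume θ L :=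
    (continuous_const.sub continuous_id).abs.intervalIntegrable _ _
  have hsplit : (∫ x in (0:ℝ)..L, |θ - x|)
      = (∫ x in (0:ℝ)..θ, |θ - x|) + ∫ x in θ..L, |θ - x| :=
    (intervalIntegral.integral_add_adjacent_intervals i1 i2).symm
  have e1 : (∫ x in (0:ℝ)..θ, |θ - x|) = ∫ x in (0:ℝ)..θ, (θ - x) := by
    apply intervalIntegral.integral_congr
    intro x hx
    rw [Set.uIcc_of_le h0] at hx
    exact abs_of_nonneg (by linarith [hx.2])
  have e2 : (∫ x in θ..L, |θ - x|) = ∫ x in θ..L, (x - θ) := by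
    apply intervalIntegral.integral_congr
    intro x hx
    rw [Set.uIcc_of_le hL] at hx
    show |θ - x| = x - θ
    rw [abs_sub_comm]
    exact abs_of_nonneg (by linarith [hx.1])
  have c1 : (∫ x in (0:ℝ)..θ, (θ - x)) = θ ^ 2 / 2 := by
    rw [intervalIntegral.integral_sub (intervalIntegrable_const) (intervalIntegral.intervalIntegrable_id),
      intervalIntegral.integral_const, integral_id]
    simp; ring
  have c2 : (∫ x in θ..L, (x - θ)) = (L - θ) ^ 2 / 2 := by
    rw [intervalIntegral.integral_sub (intervalIntegral.intervalIntegrable_id) (intervalIntegrable_const),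
      intervalIntegral.integral_const, integral_id]
    simp; ring
  rw [hsplit, e1, e2, c1, c2]
  nlinarith [sq_nonneg θ, sq_nonneg (L - θ), mul_nonneg h0 (by linarith : (0:ℝ) ≤ L - θ)]

variable {E : Type*} [NormedAddCommGroup E] [NormedSpace ℝ E]
  {ψ : ℝ → ℝ → E} (hψ : ContDiff ℝ (⊤ : ℕ∞) (fun p : ℝ × ℝ => ψ p.1 p.2))
include hψ

lemma BE_hasDerivAt_t (t θ : ℝ) :
    HasDerivAt (fun s => ψ s θ) (fderiv ℝ (fun p : ℝ × ℝ => ψ p.1 p.2) (t, θ) (1, 0)) t := by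
  have hd := (hψ.differentiable (by simp) (t, θ)).hasFDerivAt
  have hγ : HasDerivAt (fun s : ℝ => (s, θ)) ((1 : ℝ), (0 : ℝ)) t :=
    (hasDerivAt_id t).prodMk (hasDerivAt_const t θ)
  exact hd.comp_hasDerivAt t hγ

lemma BE_hasDerivAt_th (t θ : ℝ) :
    HasDerivAt (fun θ' => ψ t θ') (fderiv ℝ (fun p : ℝ × ℝ => ψ p.1 p.2) (t, θ) (0, 1)) θ := by
  have hd := (hψ.differentiable (by simp) (t, θ)).hasFDerivAt
  have hγ : HasDerivAt (fun θ' : ℝ => (t, θ')) ((0 : ℝ), (1 : ℝ)) θ :=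
    (hasDerivAt_const θ t).prodMk (hasDerivAt_id θ)
  exact hd.comp_hasDerivAt θ hγ

lemma BE_ptder_eq (t θ : ℝ) :
    ptder ψ t θ = fderiv ℝ (fun p : ℝ × ℝ => ψ p.1 p.2) (t, θ) (1, 0) :=
  (BE_hasDerivAt_t hψ t θ).deriv

lemma BE_pthder_eq (t θ : ℝ) :
    pthder ψ t θ = fderiv ℝ (fun p : ℝ × ℝ => ψ p.1 p.2) (t, θ) (0, 1) :=
  (BE_hasDerivAt_th hψ t θ).deriv

lemma BE_cont_ptder : Continuous (fun p : ℝ × ℝ => ptder ψ p.1 p.2) := by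
  have h : Continuous fun p : ℝ × ℝ => fderiv ℝ (fun p : ℝ × ℝ => ψ p.1 p.2) p :=
    hψ.continuous_fderiv (by simp)
  have h2 := h.clm_apply (continuous_const : Continuous fun _ : ℝ × ℝ => ((1 : ℝ), (0 : ℝ)))
  refine h2.congr fun p => ?_
  rw [BE_ptder_eq hψ]

lemma BE_cont_pthder : Continuous (fun p : ℝ × ℝ => pthder ψ p.1 p.2) := by
  have h : Continuous fun p : ℝ × ℝ => fderiv ℝ (fun p : ℝ × ℝ => ψ p.1 p.2) p :=
    hψ.continuous_fderiv (by simp)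
  have h2 := h.clm_apply (continuous_const : Continuous fun _ : ℝ × ℝ => ((0 : ℝ), (1 : ℝ)))
  refine h2.congr fun p => ?_
  rw [BE_pthder_eq hψ]

lemma BE_ftc_t [CompleteSpace E] (θ a b : ℝ) :
    (∫ t in a..b, ptder ψ t θ) = ψ b θ - ψ a θ := by
  apply intervalIntegral.integral_eq_sub_of_hasDerivAt
  · intro t _
    exact (BE_ptder_eq hψ t θ) ▸ BE_hasDerivAt_t hψ t θ
  · have hco : Continuous fun t : ℝ => ptder ψ t θ :=
      (BE_cont_ptder hψ).comp (continuous_id.prodMk continuous_const)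
    exact hco.intervalIntegrable _ _

lemma BE_ftc_th [CompleteSpace E] (t a b : ℝ) :
    (∫ s in a..b, pthder ψ t s) = ψ t b - ψ t a := by
  apply intervalIntegral.integral_eq_sub_of_hasDerivAt
  · intro s _
    exact (BE_pthder_eq hψ t s) ▸ BE_hasDerivAt_th hψ t s
  · have hco : Continuous fun s : ℝ => pthder ψ t s :=
      (BE_cont_pthder hψ).comp (continuous_const.prodMk continuous_id)
    exact hco.intervalIntegrable _ _

end Helpers

section ProdHelpers

lemma BE_intOn {E : Type*} [NormedAddCommGroup E] {f : ℝ × ℝ → E} (hf : Continuous f)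
    (a b a' b' : ℝ) :
    IntegrableOn f (Set.Ioc a b ×ˢ Set.Ioc a' b') (volume.prod volume) := by
  have h : IntegrableOn f (Set.Icc a b ×ˢ Set.Icc a' b') (volume.prod volume) := by
    rw [← Measure.volume_eq_prod]
    exact hf.continuousOn.integrableOn_compact (isCompact_Icc.prod isCompact_Icc)
  exact h.mono_set (Set.prod_mono Set.Ioc_subset_Icc_self Set.Ioc_subset_Icc_self)

/-- Cauchy–Schwarz on a product rectangle for the iterated integral. -/
lemma BE_prod_cs {E : Type*} [NormedAddCommGroup E] [NormedSpace ℝ E] [CompleteSpace E]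
    {f : ℝ → ℝ → E} (hf : Continuous fun p : ℝ × ℝ => f p.1 p.2)
    {δ L : ℝ} (hδ : 0 ≤ δ) (hL : 0 ≤ L) :
    ‖∫ θ in (0:ℝ)..L, ∫ t in (0:ℝ)..δ, f t θ‖ ^ 2
      ≤ (L * δ) * ∫ p in Set.Ioc (0:ℝ) δ ×ˢ Set.Ioc (0:ℝ) L, ‖f p.1 p.2‖ ^ 2
          ∂(volume.prod volume) := by
  have hg : Continuous fun p : ℝ × ℝ => f p.2 p.1 :=
    hf.comp (continuous_snd.prodMk continuous_fst)
  have hInt : IntegrableOn (fun p : ℝ × ℝ => f p.2 p.1)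
      (Set.Ioc (0:ℝ) L ×ˢ Set.Ioc (0:ℝ) δ) (volume.prod volume) := BE_intOn hg _ _ _ _
  have e1 : (∫ θ in (0:ℝ)..L, ∫ t in (0:ℝ)..δ, f t θ)
      = ∫ p in Set.Ioc (0:ℝ) L ×ˢ Set.Ioc (0:ℝ) δ, f p.2 p.1 ∂(volume.prod volume) := by
    rw [MeasureTheory.setIntegral_prod _ hInt, intervalIntegral.integral_of_le hL]
    simp_rw [intervalIntegral.integral_of_le hδ]
  rw [e1]
  set μP := (volume.prod volume).restrict (Set.Ioc (0:ℝ) L ×ˢ Set.Ioc (0:ℝ) δ) with hμP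
  haveI : IsFiniteMeasure μP := by
    constructor
    rw [hμP, Measure.restrict_apply_univ, Measure.prod_prod, Real.volume_Ioc, Real.volume_Ioc]
    exact ENNReal.mul_lt_top ENNReal.ofReal_lt_top ENNReal.ofReal_lt_top
  have hμ : (μP Set.univ).toReal = L * δ := by
    rw [hμP, Measure.restrict_apply_univ, Measure.prod_prod, Real.volume_Ioc, Real.volume_Ioc,
      sub_zero, sub_zero, ← ENNReal.ofReal_mul hL, ENNReal.toReal_ofReal (by positivity)]
  have h1 : ‖∫ p, f p.2 p.1 ∂μP‖ ≤ ∫ p, ‖f p.2 p.1‖ ∂μP :=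
    norm_integral_le_integral_norm _
  have hN : 0 ≤ ∫ p, ‖f p.2 p.1‖ ∂μP := integral_nonneg fun p => norm_nonneg _
  have hInt2 : IntegrableOn (fun p : ℝ × ℝ => ‖f p.2 p.1‖ ^ 2)
      (Set.Ioc (0:ℝ) L ×ˢ Set.Ioc (0:ℝ) δ) (volume.prod volume) :=
    BE_intOn (hg.norm.pow 2) _ _ _ _
  have h2 := BE_cs_meas μP (f := fun p : ℝ × ℝ => ‖f p.2 p.1‖) hInt.norm hInt2
  rw [hμ] at h2
  have hswap : (∫ p, ‖f p.2 p.1‖ ^ 2 ∂μP)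
      = ∫ p in Set.Ioc (0:ℝ) δ ×ˢ Set.Ioc (0:ℝ) L, ‖f p.1 p.2‖ ^ 2 ∂(volume.prod volume) := by
    rw [hμP, ← Measure.prod_restrict, ← Measure.prod_restrict]
    exact MeasureTheory.integral_prod_swap (fun p : ℝ × ℝ => ‖f p.1 p.2‖ ^ 2)
  rw [hswap] at h2
  nlinarith [norm_nonneg (∫ p, f p.2 p.1 ∂μP)]

end ProdHelpers

set_option maxHeartbeats 1600000 in
/-- The boundary estimate (eq.boundaryestimate) in the proof of Lemma 5.2: control of the
boundary term `∫ ψ ∂_t ψ` for maps with vanishing mean on the left boundary circle. -/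
theorem boundary_estimate
    (n : ℕ) (hn : 1 ≤ n) (δ : ℝ) (hδ₀ : 0 < δ) (hδ₁ : δ ≤ 1)
    (ψ : ℝ → ℝ → EuclideanSpace ℝ (Fin n))
    (hψ : ContDiff ℝ (⊤ : ℕ∞) (fun p : ℝ × ℝ => ψ p.1 p.2))
    (hper : ∀ t θ : ℝ, ψ t (θ + 2 * π) = ψ t θ)
    (hmean : (∫ θ in (0:ℝ)..(2 * π), ψ 0 θ) = 0) :
    |∫ θ in (0:ℝ)..(2 * π), (inner ℝ (ψ δ θ) (ptder ψ δ θ) : ℝ)|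
      ≤ 3 * (∫ θ in (0:ℝ)..(2 * π), (‖ptder ψ δ θ‖ ^ 2 + ‖pthder ψ δ θ‖ ^ 2))
        + (1 / 3) * ∫ t in (0:ℝ)..δ, ∫ θ in (0:ℝ)..(2 * π),
            (‖ptder ψ t θ‖ ^ 2 + ‖pthder ψ t θ‖ ^ 2) := by
  have hπ : (0:ℝ) < π := Real.pi_pos
  have twopi : (0:ℝ) < 2 * π := by positivity
  have h2π : (0:ℝ) ≤ 2 * π := twopi.le
  have hδ : (0:ℝ) ≤ δ := hδ₀.le
  have cψ : Continuous (fun p : ℝ × ℝ => ψ p.1 p.2) := hψ.continuous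
  have cPt : Continuous (fun p : ℝ × ℝ => ptder ψ p.1 p.2) := BE_cont_ptder hψ
  have cPθ : Continuous (fun p : ℝ × ℝ => pthder ψ p.1 p.2) := BE_cont_pthder hψ
  have cψδ : Continuous fun θ => ψ δ θ := cψ.comp (continuous_const.prodMk continuous_id)
  have cψ0 : Continuous fun θ => ψ 0 θ := cψ.comp (continuous_const.prodMk continuous_id)
  have cPtδ : Continuous fun θ => ptder ψ δ θ := cPt.comp (continuous_const.prodMk continuous_id)
  have cPθδ : Continuous fun θ => pthder ψ δ θ := cPθ.comp (continuous_const.prodMk continuous_id)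
  set B := (∫ θ in (0:ℝ)..(2 * π), ‖ptder ψ δ θ‖ ^ 2) with hBdef
  set D := (∫ θ in (0:ℝ)..(2 * π), ‖pthder ψ δ θ‖ ^ 2) with hDdef
  have hB0 : 0 ≤ B := intervalIntegral.integral_nonneg h2π fun x _ => sq_nonneg _
  have hD0 : 0 ≤ D := intervalIntegral.integral_nonneg h2π fun x _ => sq_nonneg _
  have hsum : (∫ θ in (0:ℝ)..(2 * π), (‖ptder ψ δ θ‖ ^ 2 + ‖pthder ψ δ θ‖ ^ 2)) = B + D :=
    intervalIntegral.integral_add ((cPtδ.norm.pow 2).intervalIntegrable _ _)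
      ((cPθδ.norm.pow 2).intervalIntegrable _ _)
  -- double integral at the product level
  have hintS : IntegrableOn (fun p : ℝ × ℝ => ‖ptder ψ p.1 p.2‖ ^ 2 + ‖pthder ψ p.1 p.2‖ ^ 2)
      (Set.Ioc (0:ℝ) δ ×ˢ Set.Ioc (0:ℝ) (2 * π)) (volume.prod volume) :=
    BE_intOn ((cPt.norm.pow 2).add (cPθ.norm.pow 2)) _ _ _ _
  have hintS1 : IntegrableOn (fun p : ℝ × ℝ => ‖ptder ψ p.1 p.2‖ ^ 2)
      (Set.Ioc (0:ℝ) δ ×ˢ Set.Ioc (0:ℝ) (2 * π)) (volume.prod volume) :=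
    BE_intOn (cPt.norm.pow 2) _ _ _ _
  have hXeq : (∫ t in (0:ℝ)..δ, ∫ θ in (0:ℝ)..(2 * π),
        (‖ptder ψ t θ‖ ^ 2 + ‖pthder ψ t θ‖ ^ 2))
      = ∫ p in Set.Ioc (0:ℝ) δ ×ˢ Set.Ioc (0:ℝ) (2 * π),
          (‖ptder ψ p.1 p.2‖ ^ 2 + ‖pthder ψ p.1 p.2‖ ^ 2) ∂(volume.prod volume) := by
    rw [MeasureTheory.setIntegral_prod _ hintS, intervalIntegral.integral_of_le hδ]
    simp_rw [intervalIntegral.integral_of_le h2π]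
  set Xt := (∫ p in Set.Ioc (0:ℝ) δ ×ˢ Set.Ioc (0:ℝ) (2 * π),
      ‖ptder ψ p.1 p.2‖ ^ 2 ∂(volume.prod volume)) with hXtdef
  have hXt0 : 0 ≤ Xt := integral_nonneg fun p => sq_nonneg _
  have hXtle : Xt ≤ ∫ p in Set.Ioc (0:ℝ) δ ×ˢ Set.Ioc (0:ℝ) (2 * π),
      (‖ptder ψ p.1 p.2‖ ^ 2 + ‖pthder ψ p.1 p.2‖ ^ 2) ∂(volume.prod volume) :=
    integral_mono hintS1 hintS fun p => le_add_of_nonneg_right (sq_nonneg _)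
  -- mean objects
  set m := (∫ θ in (0:ℝ)..(2 * π), ψ δ θ) with hmdef
  set c := (2 * π)⁻¹ • m with hcdef
  set q := (∫ θ in (0:ℝ)..(2 * π), ptder ψ δ θ) with hqdef
  have hq2 : ‖q‖ ^ 2 ≤ (2 * π) * B := by
    have h := BE_norm_int_sq_le h2π cPtδ
    rw [sub_zero] at h
    exact h
  have hm_eq : m = ∫ θ in (0:ℝ)..(2 * π), ∫ t in (0:ℝ)..δ, ptder ψ t θ := by
    have hfun : (fun θ => ∫ t in (0:ℝ)..δ, ptder ψ t θ) = fun θ => ψ δ θ - ψ 0 θ :=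
      funext fun θ => BE_ftc_t hψ θ 0 δ
    rw [hfun, intervalIntegral.integral_sub (cψδ.intervalIntegrable _ _)
      (cψ0.intervalIntegrable _ _), hmean, sub_zero]
  have hm2 : ‖m‖ ^ 2 ≤ (2 * π * δ) * Xt := by
    rw [hm_eq]
    exact BE_prod_cs cPt hδ h2π
  have hc2 : ‖c‖ ^ 2 = ((2 * π)⁻¹) ^ 2 * ‖m‖ ^ 2 := by
    rw [hcdef, norm_smul, Real.norm_eq_abs, abs_of_pos (by positivity), mul_pow]
  -- Poincaré inequality on the boundary circle
  have diffb : ∀ a b : ℝ, 0 ≤ a → a ≤ b → b ≤ 2 * π → ‖ψ δ b - ψ δ a‖ ^ 2 ≤ (b - a) * D := by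
    intro a b h0a hab hb
    have e : ψ δ b - ψ δ a = ∫ s in a..b, pthder ψ δ s := (BE_ftc_th hψ δ a b).symm
    rw [e]
    have h1 := BE_norm_int_sq_le hab cPθδ
    have h2 : (∫ s in a..b, ‖pthder ψ δ s‖ ^ 2) ≤ D := by
      rw [hDdef]
      apply intervalIntegral.integral_mono_interval h0a hab hb
        (Filter.Eventually.of_forall fun x => sq_nonneg _)
        ((cPθδ.norm.pow 2).intervalIntegrable _ _)
    exact h1.trans (mul_le_mul_of_nonneg_left h2 (by linarith))
  have diffb' : ∀ θ ∈ Set.Icc (0:ℝ) (2 * π), ∀ x ∈ Set.Icc (0:ℝ) (2 * π),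
      ‖ψ δ θ - ψ δ x‖ ^ 2 ≤ |θ - x| * D := by
    intro θ hθ x hx
    rcases le_total x θ with h | h
    · rw [abs_of_nonneg (by linarith)]
      exact diffb x θ hx.1 h hθ.2
    · rw [abs_of_nonpos (by linarith), norm_sub_rev, neg_sub]
      exact diffb θ x hθ.1 h hx.2
  have poin : ∀ θ ∈ Set.Icc (0:ℝ) (2 * π), ‖ψ δ θ - c‖ ^ 2 ≤ π * D := by
    intro θ hθ
    have hrep : ψ δ θ - c = (2 * π)⁻¹ • ∫ x in (0:ℝ)..(2 * π), (ψ δ θ - ψ δ x) := by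
      rw [intervalIntegral.integral_sub intervalIntegrable_const (cψδ.intervalIntegrable _ _),
        intervalIntegral.integral_const, smul_sub, smul_smul, sub_zero,
        inv_mul_cancel₀ twopi.ne', one_smul, hcdef]
    have h1 := BE_norm_int_sq_le (g := fun x => ψ δ θ - ψ δ x) h2π
      ((continuous_const : Continuous fun _ : ℝ => ψ δ θ).sub cψδ)
    rw [sub_zero] at h1
    have h2 : (∫ x in (0:ℝ)..(2 * π), ‖ψ δ θ - ψ δ x‖ ^ 2)
        ≤ (∫ x in (0:ℝ)..(2 * π), |θ - x| * D) := by
      apply intervalIntegral.integral_mono_on h2π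
        ((((continuous_const : Continuous fun _ : ℝ => ψ δ θ).sub cψδ).norm.pow 2).intervalIntegrable _ _)
        (((continuous_const.sub continuous_id).abs.mul continuous_const).intervalIntegrable _ _)
      exact fun x hx => diffb' θ hθ x hx
    have h2' : (∫ x in (0:ℝ)..(2 * π), |θ - x| * D)
        = (∫ x in (0:ℝ)..(2 * π), |θ - x|) * D := by
      rw [intervalIntegral.integral_mul_const]
    have h3 : (∫ x in (0:ℝ)..(2 * π), |θ - x|) ≤ (2 * π) ^ 2 / 2 := BE_int_abs_le hθ.1 hθ.2
    have hintnn : 0 ≤ ∫ x in (0:ℝ)..(2 * π), ‖ψ δ θ - ψ δ x‖ ^ 2 :=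
      intervalIntegral.integral_nonneg h2π fun x _ => sq_nonneg _
    rw [hrep, norm_smul, Real.norm_eq_abs, abs_of_pos (by positivity), mul_pow]
    calc ((2 * π)⁻¹) ^ 2 * ‖∫ x in (0:ℝ)..(2 * π), (ψ δ θ - ψ δ x)‖ ^ 2
        ≤ ((2 * π)⁻¹) ^ 2 * ((2 * π) * ((2 * π) ^ 2 / 2 * D)) := by
          apply mul_le_mul_of_nonneg_left _ (sq_nonneg _)
          refine h1.trans (mul_le_mul_of_nonneg_left ?_ (by linarith))
          refine (h2.trans_eq h2').trans (mul_le_mul_of_nonneg_right h3 hD0)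
      _ = π * D := by field_simp
  -- decomposition of the boundary integral
  have hint1 : IntervalIntegrable (fun θ => (inner ℝ (ψ δ θ - c) (ptder ψ δ θ) : ℝ))
      volume 0 (2 * π) := ((cψδ.sub continuous_const).inner cPtδ).intervalIntegrable _ _
  have hint2 : IntervalIntegrable (fun θ => (inner ℝ c (ptder ψ δ θ) : ℝ))
      volume 0 (2 * π) := (continuous_const.inner cPtδ).intervalIntegrable _ _
  have hdec : (∫ θ in (0:ℝ)..(2 * π), (inner ℝ (ψ δ θ) (ptder ψ δ θ) : ℝ))
      = (∫ θ in (0:ℝ)..(2 * π), (inner ℝ (ψ δ θ - c) (ptder ψ δ θ) : ℝ)) + (inner ℝ c q : ℝ) := by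
    have hpt : ∀ θ : ℝ, (inner ℝ (ψ δ θ) (ptder ψ δ θ) : ℝ)
        = (inner ℝ (ψ δ θ - c) (ptder ψ δ θ) : ℝ) + (inner ℝ c (ptder ψ δ θ) : ℝ) := by
      intro θ; rw [inner_sub_left]; ring
    rw [intervalIntegral.integral_congr (g := fun θ =>
        (inner ℝ (ψ δ θ - c) (ptder ψ δ θ) : ℝ) + (inner ℝ c (ptder ψ δ θ) : ℝ))
        (fun θ _ => hpt θ),
      intervalIntegral.integral_add hint1 hint2]
    congr 1
    rw [hqdef, intervalIntegral.integral_of_le h2π, intervalIntegral.integral_of_le h2π]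
    exact integral_inner cPtδ.integrableOn_Ioc c
  -- bound the oscillation term
  have hI2 : |∫ θ in (0:ℝ)..(2 * π), (inner ℝ (ψ δ θ - c) (ptder ψ δ θ) : ℝ)|
      ≤ (2 * π) * (π * D) / 9 + (9 / 4) * B := by
    have habs : |∫ θ in (0:ℝ)..(2 * π), (inner ℝ (ψ δ θ - c) (ptder ψ δ θ) : ℝ)|
        ≤ ∫ θ in (0:ℝ)..(2 * π), |(inner ℝ (ψ δ θ - c) (ptder ψ δ θ) : ℝ)| := by
      have h := intervalIntegral.norm_integral_le_integral_norm (μ := volume)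
        (f := fun θ => (inner ℝ (ψ δ θ - c) (ptder ψ δ θ) : ℝ)) h2π
      simpa [Real.norm_eq_abs] using h
    have hmono : (∫ θ in (0:ℝ)..(2 * π), |(inner ℝ (ψ δ θ - c) (ptder ψ δ θ) : ℝ)|)
        ≤ ∫ θ in (0:ℝ)..(2 * π),
            ((1 / 9) * ‖ψ δ θ - c‖ ^ 2 + (9 / 4) * ‖ptder ψ δ θ‖ ^ 2) := by
      apply intervalIntegral.integral_mono_on h2π
        (((cψδ.sub continuous_const).inner cPtδ).abs.intervalIntegrable _ _)
        (((continuous_const.mul ((cψδ.sub continuous_const).norm.pow 2)).add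
          (continuous_const.mul (cPtδ.norm.pow 2))).intervalIntegrable _ _)
      intro θ _
      show |(inner ℝ (ψ δ θ - c) (ptder ψ δ θ) : ℝ)| ≤ (1 / 9) * ‖ψ δ θ - c‖ ^ 2 + (9 / 4) * ‖ptder ψ δ θ‖ ^ 2
      have h := abs_real_inner_le_norm (ψ δ θ - c) (ptder ψ δ θ)
      nlinarith [sq_nonneg ((1 / 3) * ‖ψ δ θ - c‖ - (3 / 2) * ‖ptder ψ δ θ‖),
        norm_nonneg (ψ δ θ - c), norm_nonneg (ptder ψ δ θ)]
    have hsplit : (∫ θ in (0:ℝ)..(2 * π),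
          ((1 / 9) * ‖ψ δ θ - c‖ ^ 2 + (9 / 4) * ‖ptder ψ δ θ‖ ^ 2))
        = (1 / 9) * (∫ θ in (0:ℝ)..(2 * π), ‖ψ δ θ - c‖ ^ 2) + (9 / 4) * B := by
      rw [intervalIntegral.integral_add (f := fun θ => (1 / 9) * ‖ψ δ θ - c‖ ^ 2)
        (g := fun θ => (9 / 4) * ‖ptder ψ δ θ‖ ^ 2)
        ((continuous_const.mul ((cψδ.sub continuous_const).norm.pow 2)).intervalIntegrable _ _)
        ((continuous_const.mul (cPtδ.norm.pow 2)).intervalIntegrable _ _),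
        intervalIntegral.integral_const_mul, intervalIntegral.integral_const_mul, hBdef]
    have hp2 : (∫ θ in (0:ℝ)..(2 * π), ‖ψ δ θ - c‖ ^ 2) ≤ (2 * π) * (π * D) := by
      have h := intervalIntegral.integral_mono_on h2π
        (((cψδ.sub continuous_const).norm.pow 2).intervalIntegrable _ _)
        (intervalIntegrable_const (μ := volume)) poin
      rwa [intervalIntegral.integral_const, smul_eq_mul, sub_zero] at h
    calc |∫ θ in (0:ℝ)..(2 * π), (inner ℝ (ψ δ θ - c) (ptder ψ δ θ) : ℝ)|
        ≤ (1 / 9) * (∫ θ in (0:ℝ)..(2 * π), ‖ψ δ θ - c‖ ^ 2) + (9 / 4) * B := by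
          rw [← hsplit]; exact habs.trans hmono
      _ ≤ (2 * π) * (π * D) / 9 + (9 / 4) * B := by linarith
  -- bound the mean term
  have hcq : |(inner ℝ c q : ℝ)| ≤ (3 / 4) * B + (1 / 3) * Xt := by
    have h := abs_real_inner_le_norm c q
    have hc2' : ‖c‖ ^ 2 ≤ δ * Xt / (2 * π) := by
      rw [hc2]
      have h1 : ((2 * π)⁻¹) ^ 2 * ‖m‖ ^ 2 ≤ ((2 * π)⁻¹) ^ 2 * ((2 * π * δ) * Xt) :=
        mul_le_mul_of_nonneg_left hm2 (sq_nonneg _)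
      have h2 : ((2 * π)⁻¹) ^ 2 * ((2 * π * δ) * Xt) = δ * Xt / (2 * π) := by
        field_simp
      linarith
    have hprod : (‖c‖ * ‖q‖) ^ 2 ≤ Xt * B := by
      have h1 : ‖c‖ ^ 2 * ‖q‖ ^ 2 ≤ (δ * Xt / (2 * π)) * ((2 * π) * B) :=
        mul_le_mul hc2' hq2 (sq_nonneg _) (div_nonneg (mul_nonneg hδ hXt0) h2π)
      have h2 : (δ * Xt / (2 * π)) * ((2 * π) * B) = δ * (Xt * B) := by field_simp
      have h3 : δ * (Xt * B) ≤ Xt * B := by nlinarith [mul_nonneg hXt0 hB0]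
      calc (‖c‖ * ‖q‖) ^ 2 = ‖c‖ ^ 2 * ‖q‖ ^ 2 := by ring
        _ ≤ Xt * B := by linarith
    have hw : ‖c‖ * ‖q‖ ≤ (3 / 4) * B + (1 / 3) * Xt := by
      have hwnn : 0 ≤ ‖c‖ * ‖q‖ := mul_nonneg (norm_nonneg c) (norm_nonneg q)
      have hRnn : 0 ≤ (3 / 4) * B + (1 / 3) * Xt := by linarith
      have hsq : (‖c‖ * ‖q‖) ^ 2 ≤ ((3 / 4) * B + (1 / 3) * Xt) ^ 2 := by
        nlinarith [sq_nonneg ((3 / 4) * B - (1 / 3) * Xt)]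
      exact (pow_le_pow_iff_left₀ hwnn hRnn (by norm_num)).mp hsq
    exact h.trans hw
  -- conclusion
  rw [hsum, hXeq, hdec]
  have htri : |(∫ θ in (0:ℝ)..(2 * π), (inner ℝ (ψ δ θ - c) (ptder ψ δ θ) : ℝ)) + (inner ℝ c q : ℝ)|
      ≤ |∫ θ in (0:ℝ)..(2 * π), (inner ℝ (ψ δ θ - c) (ptder ψ δ θ) : ℝ)| + |(inner ℝ c q : ℝ)| :=
    abs_add_le _ _
  have hpisq : π ^ 2 < 10 := by nlinarith [Real.pi_lt_d2, Real.pi_pos]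
  have hD3 : (2 * π) * (π * D) / 9 ≤ 3 * D := by nlinarith [hD0, hpisq]
  linarith [hI2, hcq, htri, hXtle, hD3]
end

section
/- Let H and V be real Hilbert spaces, let i : H → V be an injective compact continuous linear map with dense range, let a : H × H → ℝ be a continuous symmetric bilinear form, and suppose there exist λ > 0 and α > 0 with a(x,x) + λ⟨i x, i x⟩_V ≥ α‖x‖_H² for all x ∈ H. Then there exists a compact continuous linear operator T : V → V such that: (i) for every v ∈ V there is a unique x_v ∈ H with T v = i x_v and a(x_v, y) + λ⟨i x_v, i y⟩_V = ⟨v, i y⟩_V for all y ∈ H; (ii) T is symmetric: ⟨T v, w⟩_V = ⟨v, T w⟩_V for all v, w ∈ V; (iii) T is positive: ⟨T v, v⟩_V ≥ 0 for all v ∈ V; (iv) T is injective. -/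
/-!
Let `b x y = a x y + λ⟪i x, i y⟫`. It is coercive on `H`, so by Lax–Milgram every functional
`y ↦ ⟪v, i y⟫ = ⟪i† v, y⟫` is represented as `b (S v) ·` for a bounded solution map
`S : V → H`, and `T = i ∘ S`. Testing the defining equation of `S w` against `S v` gives
`⟪T v, w⟫ = b (S w) (S v)`, from which symmetry and positivity of `T` follow from those of `b`;
compactness is inherited from `i`. If `S v = S w`, then `v - w` is orthogonal to the dense range
of `i`, so `S`, and hence `T`, is injective.
-/

open ContinuousLinearMap Function
open scoped RealInnerProductSpace

theorem IsCoercive.apply_self_nonneg {E : Type*} [SeminormedAddCommGroup E] [NormedSpace ℝ E]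
    {b : E →L[ℝ] E →L[ℝ] ℝ} (hb : IsCoercive b) (x : E) : 0 ≤ b x x := by
  obtain ⟨C, hC, hcoer⟩ := hb
  exact le_trans (by positivity) (hcoer x)

namespace IsCoercive

variable {H V : Type*} [NormedAddCommGroup H] [InnerProductSpace ℝ H] [CompleteSpace H]
  [NormedAddCommGroup V] [InnerProductSpace ℝ V] [CompleteSpace V]
  {b : H →L[ℝ] H →L[ℝ] ℝ} (hb : IsCoercive b) (i : H →L[ℝ] V)

noncomputable def solutionMap : V →L[ℝ] H :=
  (hb.continuousLinearEquivOfBilin.symm : H →L[ℝ] H) ∘L adjoint i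

theorem apply_solutionMap (v : V) (y : H) : b (hb.solutionMap i v) y = ⟪v, i y⟫ := by
  rw [← hb.continuousLinearEquivOfBilin_apply, solutionMap, coe_comp, comp_apply,
    ContinuousLinearEquiv.coe_coe, ContinuousLinearEquiv.apply_symm_apply, adjoint_inner_left]

theorem solutionMap_injective (hdense : DenseRange i) : Injective (hb.solutionMap i) :=
  fun v w hvw => hdense.eq_of_inner_left ℝ fun y => by
    rw [← hb.apply_solutionMap, ← hb.apply_solutionMap, hvw]

noncomputable def resolvent : V →L[ℝ] V :=
  i ∘L hb.solutionMap i

theorem resolvent_apply (v : V) : hb.resolvent i v = i (hb.solutionMap i v) := rfl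

theorem inner_resolvent_left (v w : V) :
    ⟪hb.resolvent i v, w⟫ = b (hb.solutionMap i w) (hb.solutionMap i v) := by
  rw [resolvent_apply, real_inner_comm, hb.apply_solutionMap]

theorem inner_resolvent_comm (hsymm : ∀ x y, b x y = b y x) (v w : V) :
    ⟪hb.resolvent i v, w⟫ = ⟪v, hb.resolvent i w⟫ := by
  rw [hb.inner_resolvent_left, real_inner_comm, hb.inner_resolvent_left, hsymm]

theorem inner_resolvent_self_nonneg (v : V) : 0 ≤ ⟪hb.resolvent i v, v⟫ := by
  rw [hb.inner_resolvent_left]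
  exact hb.apply_self_nonneg _

theorem isCompactOperator_resolvent (hcomp : IsCompactOperator i) :
    IsCompactOperator (hb.resolvent i) :=
  hcomp.comp_clm _

theorem resolvent_injective (hinj : Injective i) (hdense : DenseRange i) :
    Injective (hb.resolvent i) :=
  hinj.comp (hb.solutionMap_injective i hdense)

end IsCoercive

section ShiftedForm

variable {H V : Type*} [NormedAddCommGroup H] [InnerProductSpace ℝ H]
  [NormedAddCommGroup V] [InnerProductSpace ℝ V]

noncomputable def shiftedForm (a : H →L[ℝ] H →L[ℝ] ℝ) (i : H →L[ℝ] V) (lam : ℝ) :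
    H →L[ℝ] H →L[ℝ] ℝ :=
  a + lam • ((innerSL ℝ).bilinearComp i i : H →L[ℝ] H →L[ℝ] ℝ)

@[simp]
theorem shiftedForm_apply (a : H →L[ℝ] H →L[ℝ] ℝ) (i : H →L[ℝ] V) (lam : ℝ) (x y : H) :
    shiftedForm a i lam x y = a x y + lam * ⟪i x, i y⟫ := by
  simp [shiftedForm]

theorem shiftedForm_comm {a : H →L[ℝ] H →L[ℝ] ℝ} (hsymm : ∀ x y, a x y = a y x)
    (i : H →L[ℝ] V) (lam : ℝ) (x y : H) :
    shiftedForm a i lam x y = shiftedForm a i lam y x := by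
  rw [shiftedForm_apply, shiftedForm_apply, hsymm, real_inner_comm]

theorem isCoercive_shiftedForm {a : H →L[ℝ] H →L[ℝ] ℝ} {i : H →L[ℝ] V} {lam α : ℝ}
    (hα : 0 < α) (hcoer : ∀ x, α * ‖x‖ ^ 2 ≤ a x x + lam * ⟪i x, i x⟫) :
    IsCoercive (shiftedForm a i lam) :=
  ⟨α, hα, fun x => by simpa only [shiftedForm_apply, mul_assoc, ← sq] using hcoer x⟩

end ShiftedForm

theorem exists_compact_resolvent_operator_general
    {H V : Type*}
    [NormedAddCommGroup H] [InnerProductSpace ℝ H] [CompleteSpace H]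
    [NormedAddCommGroup V] [InnerProductSpace ℝ V] [CompleteSpace V]
    (i : H →L[ℝ] V) (hinj : Function.Injective i)
    (hcomp : IsCompactOperator (⇑i)) (hdense : DenseRange (⇑i))
    (a : H →L[ℝ] H →L[ℝ] ℝ) (hsymm : ∀ x y : H, a x y = a y x)
    (lam α : ℝ) (hα : 0 < α)
    (hcoer : ∀ x : H, α * ‖x‖ ^ 2 ≤ a x x + lam * (inner ℝ (i x) (i x) : ℝ)) :
    ∃ T : V →L[ℝ] V, IsCompactOperator (⇑T) ∧
      (∀ v : V, ∃! x : H, T v = i x ∧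
        ∀ y : H, a x y + lam * (inner ℝ (i x) (i y) : ℝ) = (inner ℝ v (i y) : ℝ)) ∧
      (∀ v w : V, (inner ℝ (T v) w : ℝ) = (inner ℝ v (T w) : ℝ)) ∧
      (∀ v : V, 0 ≤ (inner ℝ (T v) v : ℝ)) ∧
      Function.Injective T := by
  have hb := isCoercive_shiftedForm hα hcoer
  refine ⟨hb.resolvent i, hb.isCompactOperator_resolvent i hcomp, fun v => ?_,
    hb.inner_resolvent_comm i (shiftedForm_comm hsymm i lam), hb.inner_resolvent_self_nonneg i,
    hb.resolvent_injective i hinj hdense⟩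
  refine ⟨hb.solutionMap i v, ⟨rfl, fun y => ?_⟩, fun x hx => hinj hx.1.symm⟩
  rw [← shiftedForm_apply]
  exact hb.apply_solutionMap i v y

/-- Appendix A: existence of the compact, symmetric, positive, injective resolvent-type
operator `T` associated to a continuous symmetric bilinear form `a` on `H` that is
coercive after adding `λ` times the scalar product of `V`, where `H` embeds compactly and
densely into `V`. -/
theorem exists_compact_resolvent_operator
    {H V : Type*}
    [NormedAddCommGroup H] [InnerProductSpace ℝ H] [CompleteSpace H]
    [NormedAddCommGroup V] [InnerProductSpace ℝ V] [CompleteSpace V]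
    (i : H →L[ℝ] V) (hinj : Function.Injective i)
    (hcomp : IsCompactOperator (⇑i)) (hdense : DenseRange (⇑i))
    (a : H →L[ℝ] H →L[ℝ] ℝ) (hsymm : ∀ x y : H, a x y = a y x)
    (lam α : ℝ) (hlam : 0 < lam) (hα : 0 < α)
    (hcoer : ∀ x : H, α * ‖x‖ ^ 2 ≤ a x x + lam * (inner ℝ (i x) (i x) : ℝ)) :
    ∃ T : V →L[ℝ] V, IsCompactOperator (⇑T) ∧
      (∀ v : V, ∃! x : H, T v = i x ∧
        ∀ y : H, a x y + lam * (inner ℝ (i x) (i y) : ℝ) = (inner ℝ v (i y) : ℝ)) ∧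
      (∀ v w : V, (inner ℝ (T v) w : ℝ) = (inner ℝ v (T w) : ℝ)) ∧
      (∀ v : V, 0 ≤ (inner ℝ (T v) v : ℝ)) ∧
      Function.Injective T :=
  exists_compact_resolvent_operator_general i hinj hcomp hdense a hsymm lam α hα hcoer
end

section
/- Let H and V be real Hilbert spaces, let i : H → V be an injective compact continuous linear map with dense range, let a : H × H → ℝ be a continuous symmetric bilinear form, and suppose there exist λ > 0 and α > 0 with a(x,x) + λ⟨i x, i x⟩_V ≥ α‖x‖_H² for all x ∈ H. Let T : V → V be a linear map such that for every v ∈ V there exists x_v ∈ H with T v = i x_v and a(x_v, y) + λ⟨i x_v, i y⟩_V = ⟨v, i y⟩_V for all y ∈ H. Then for every x ∈ H: λ · T(i x) = i x if and only if a(x, y) = 0 for all y ∈ H. -/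
/-!
If `λ T(i x) = i x`, then `λ⁻¹ x` is the weak solution of `(A + λ) u = i x`, and substituting it
into the weak equation leaves exactly `a(x, ·) = 0`. Conversely, if `a(x, ·) = 0` then `λ⁻¹ x`
solves that weak equation, and coercivity of `a + λ⟨i ·, i ·⟩_V` makes the solution unique, so it
is the one `T` picks.
-/

open scoped RealInnerProductSpace

/-- `x` is the weak solution of `(A + λ) x = v`, where `A` is the operator of the form `a`;
the resolvent `T` of the theorem maps `v` to `i x`. -/
def IsWeakResolvent {H V : Type*} [NormedAddCommGroup H] [InnerProductSpace ℝ H]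
    [NormedAddCommGroup V] [InnerProductSpace ℝ V]
    (a : H →L[ℝ] H →L[ℝ] ℝ) (i : H →L[ℝ] V) (lam : ℝ) (v : V) (x : H) : Prop :=
  ∀ y : H, a x y + lam * ⟪i x, i y⟫ = ⟪v, i y⟫

namespace IsWeakResolvent

variable {H V : Type*} [NormedAddCommGroup H] [InnerProductSpace ℝ H]
  [NormedAddCommGroup V] [InnerProductSpace ℝ V]
  {a : H →L[ℝ] H →L[ℝ] ℝ} {i : H →L[ℝ] V} {lam : ℝ}

theorem sub {v₁ v₂ : V} {x₁ x₂ : H} (h₁ : IsWeakResolvent a i lam v₁ x₁)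
    (h₂ : IsWeakResolvent a i lam v₂ x₂) : IsWeakResolvent a i lam (v₁ - v₂) (x₁ - x₂) := by
  intro y
  simp only [map_sub, sub_apply, inner_sub_left, ← h₁ y, ← h₂ y]
  ring

theorem unique {α : ℝ} (hα : 0 < α)
    (hcoer : ∀ x : H, α * ‖x‖ ^ 2 ≤ a x x + lam * ⟪i x, i x⟫)
    {v : V} {x₁ x₂ : H} (h₁ : IsWeakResolvent a i lam v x₁)
    (h₂ : IsWeakResolvent a i lam v x₂) : x₁ = x₂ := by
  set z := x₁ - x₂
  have hz : a z z + lam * ⟪i z, i z⟫ = 0 := by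
    simpa only [sub_self, inner_zero_left] using h₁.sub h₂ z
  have hnorm : α * ‖z‖ ^ 2 ≤ 0 := hz ▸ hcoer z
  have hsq : ‖z‖ ^ 2 = 0 := le_antisymm (nonpos_of_mul_nonpos_right hnorm hα) (sq_nonneg _)
  exact sub_eq_zero.mp (norm_eq_zero.mp (pow_eq_zero_iff two_ne_zero |>.mp hsq))

theorem inv_smul_self_iff (hlam : lam ≠ 0) (x : H) :
    IsWeakResolvent a i lam (i x) (lam⁻¹ • x) ↔ ∀ y : H, a x y = 0 := by
  refine forall_congr' fun y => ?_
  simp only [map_smul, smul_apply, smul_eq_mul, inner_smul_left,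
    RCLike.conj_to_real, ← mul_assoc, mul_inv_cancel₀ hlam, one_mul, add_eq_right,
    mul_eq_zero, inv_eq_zero, hlam, false_or]

end IsWeakResolvent

theorem resolvent_fixed_point_iff_radical_general
    {H V : Type*}
    [NormedAddCommGroup H] [InnerProductSpace ℝ H]
    [NormedAddCommGroup V] [InnerProductSpace ℝ V]
    (i : H →L[ℝ] V) (hinj : Function.Injective i)
    (a : H →L[ℝ] H →L[ℝ] ℝ)
    (lam α : ℝ) (hlam : 0 < lam) (hα : 0 < α)
    (hcoer : ∀ x : H, α * ‖x‖ ^ 2 ≤ a x x + lam * (inner ℝ (i x) (i x) : ℝ))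
    (T : V →ₗ[ℝ] V)
    (hT : ∀ v : V, ∃ x : H, T v = i x ∧
      ∀ y : H, a x y + lam * (inner ℝ (i x) (i y) : ℝ) = (inner ℝ v (i y) : ℝ)) :
    ∀ x : H, (lam • T (i x) = i x ↔ ∀ y : H, a x y = 0) := by
  intro x
  obtain ⟨x', hTx, hweak⟩ := hT (i x)
  have hx' : IsWeakResolvent a i lam (i x) x' := hweak
  rw [hTx, ← map_smul, hinj.eq_iff, ← IsWeakResolvent.inv_smul_self_iff (i := i) hlam.ne',
    ← eq_inv_smul_iff₀ hlam.ne']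
  exact ⟨fun h => h ▸ hx', hx'.unique hα hcoer⟩

/-- Lemma A.1 (ii): the kernel of the densely defined operator `A_S = T⁻¹ - λ·id`
(expressed via the resolvent relation `λ • T (i x) = i x`) coincides with the radical
`{x ∈ H : a(x,·) ≡ 0}` of the bilinear form `a`. -/
theorem resolvent_fixed_point_iff_radical
    {H V : Type*}
    [NormedAddCommGroup H] [InnerProductSpace ℝ H] [CompleteSpace H]
    [NormedAddCommGroup V] [InnerProductSpace ℝ V] [CompleteSpace V]
    (i : H →L[ℝ] V) (hinj : Function.Injective i)
    (hcomp : IsCompactOperator (⇑i)) (hdense : DenseRange (⇑i))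
    (a : H →L[ℝ] H →L[ℝ] ℝ) (hsymm : ∀ x y : H, a x y = a y x)
    (lam α : ℝ) (hlam : 0 < lam) (hα : 0 < α)
    (hcoer : ∀ x : H, α * ‖x‖ ^ 2 ≤ a x x + lam * (inner ℝ (i x) (i x) : ℝ))
    (T : V →ₗ[ℝ] V)
    (hT : ∀ v : V, ∃ x : H, T v = i x ∧
      ∀ y : H, a x y + lam * (inner ℝ (i x) (i y) : ℝ) = (inner ℝ v (i y) : ℝ)) :
    ∀ x : H, (lam • T (i x) = i x ↔ ∀ y : H, a x y = 0) :=
  resolvent_fixed_point_iff_radical_general i hinj a lam α hlam hα hcoer T hT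
end

section
/- Let H and V be real Hilbert spaces, let i : H → V be an injective compact continuous linear map with dense range, let a : H × H → ℝ be a continuous symmetric bilinear form, and suppose there exist λ > 0 and α > 0 with a(x,x) + λ⟨i x, i x⟩_V ≥ α‖x‖_H² for all x ∈ H. Define E := { x ∈ H : there exists ρ < 0 such that a(x, y) = ρ ⟨i x, i y⟩_V for all y ∈ H }. Then a is negative definite on the linear span of E: for every nonzero x in span(E) one has a(x, x) < 0. -/
/-!
Eigenvectors of a symmetric form `a` relative to a symmetric form `b` that belong to distinct
eigenvalues are `a`-orthogonal: from `a u v = ρ b(u, v)` and `a v u = σ b(v, u)` one gets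
`(ρ - σ) b(u, v) = 0`. Hence, writing `x` in the span as a finite sum `∑ x_ρ` of eigenvectors with
distinct negative eigenvalues, the cross terms of `a(x, x)` vanish and
`a(x, x) = ∑ ρ b(x_ρ, x_ρ) < 0` when `b` is positive definite, as `b(x, y) = ⟨i x, i y⟩_V` is
for injective `i`.
-/

namespace LinearMap.BilinForm

variable {R M : Type*} [CommRing R] [AddCommGroup M] [Module R M] {a b : LinearMap.BilinForm R M}

/-- The eigenvectors of `a` relative to `b` with eigenvalue `ρ`, together with `0`. -/
def relEigenspace (a b : LinearMap.BilinForm R M) (ρ : R) : Submodule R M :=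
  LinearMap.ker (a - ρ • b)

theorem mem_relEigenspace_iff {ρ : R} {x : M} :
    x ∈ relEigenspace a b ρ ↔ ∀ y, a x y = ρ * b x y := by
  simp [relEigenspace, LinearMap.ext_iff, sub_eq_zero]

theorem apply_eq_zero_of_mem_relEigenspace [IsDomain R] (ha : a.IsSymm) (hb : b.IsSymm)
    {ρ σ : R} (hρσ : ρ ≠ σ) {u v : M} (hu : u ∈ relEigenspace a b ρ)
    (hv : v ∈ relEigenspace a b σ) : a u v = 0 := by
  rw [mem_relEigenspace_iff] at hu hv
  have hbuv : (ρ - σ) * b u v = 0 := by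
    rw [sub_mul, ← hu, ← ha.eq, hv, ← hb.eq, sub_self]
  rw [hu, (mul_eq_zero.mp hbuv).resolve_left (sub_ne_zero.mpr hρσ), mul_zero]

theorem apply_sum_sum_of_mem_relEigenspace [IsDomain R] (ha : a.IsSymm) (hb : b.IsSymm)
    {ι : Type*} (s : Finset ι) {e : ι → R} (he : Set.InjOn e s) {f : ι → M}
    (hf : ∀ j ∈ s, f j ∈ relEigenspace a b (e j)) :
    a (∑ j ∈ s, f j) (∑ j ∈ s, f j) = ∑ j ∈ s, e j * b (f j) (f j) := by
  rw [sum_left]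
  refine Finset.sum_congr rfl fun j hj => ?_
  rw [sum_right, Finset.sum_eq_single_of_mem j hj fun k hk hkj =>
    apply_eq_zero_of_mem_relEigenspace ha hb (fun h => hkj (he hj hk h).symm) (hf j hj) (hf k hk)]
  exact mem_relEigenspace_iff.mp (hf j hj) (f j)

theorem apply_self_neg_of_mem_iSup_relEigenspace [LinearOrder R] [IsStrictOrderedRing R]
    (ha : a.IsSymm) (hb : b.IsSymm) (hbpos : ∀ x ≠ 0, 0 < b x x) {x : M}
    (hx : x ∈ ⨆ ρ : Set.Iio (0 : R), relEigenspace a b (ρ : R)) (hx0 : x ≠ 0) : a x x < 0 := by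
  obtain ⟨f, hf, rfl⟩ := (Submodule.mem_iSup_iff_exists_finsupp _ x).mp hx
  have hsupp : f.support.Nonempty := Finsupp.support_nonempty_iff.mpr fun h => hx0 (by simp [h])
  rw [Finsupp.sum, apply_sum_sum_of_mem_relEigenspace ha hb _ Subtype.val_injective.injOn
    fun ρ _ => hf ρ]
  exact Finset.sum_neg
    (fun ρ hρ => mul_neg_of_neg_of_pos ρ.2 (hbpos _ (Finsupp.mem_support_iff.mp hρ))) hsupp

end LinearMap.BilinForm

theorem negative_definite_on_span_of_negative_eigenvectors_general
    {H V : Type*}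
    [NormedAddCommGroup H] [InnerProductSpace ℝ H]
    [NormedAddCommGroup V] [InnerProductSpace ℝ V]
    (i : H →L[ℝ] V) (hinj : Function.Injective i)
    (a : H →L[ℝ] H →L[ℝ] ℝ) (hsymm : ∀ x y : H, a x y = a y x) :
    ∀ x ∈ Submodule.span ℝ
        {x : H | ∃ ρ : ℝ, ρ < 0 ∧ ∀ y : H, a x y = ρ * (inner ℝ (i x) (i y) : ℝ)},
      x ≠ 0 → a x x < 0 := by
  let b : LinearMap.BilinForm ℝ H := (innerₗ V).compl₁₂ (i : H →ₗ[ℝ] V) (i : H →ₗ[ℝ] V)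
  have hb : b.IsSymm := ⟨fun x y => real_inner_comm (i y) (i x)⟩
  have hbpos : ∀ x ≠ 0, 0 < b x x := fun x hx =>
    real_inner_self_pos.mpr ((map_ne_zero_iff i hinj).mpr hx)
  have hspan : Submodule.span ℝ
      {x : H | ∃ ρ : ℝ, ρ < 0 ∧ ∀ y : H, a x y = ρ * (inner ℝ (i x) (i y) : ℝ)} ≤
      ⨆ ρ : Set.Iio (0 : ℝ), LinearMap.BilinForm.relEigenspace a.toLinearMap₁₂ b (ρ : ℝ) :=
    Submodule.span_le.mpr fun x ⟨ρ, hρ, hx⟩ => Submodule.mem_iSup_of_mem ⟨ρ, hρ⟩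
      (LinearMap.BilinForm.mem_relEigenspace_iff.mpr hx)
  exact fun x hx => LinearMap.BilinForm.apply_self_neg_of_mem_iSup_relEigenspace
    ⟨fun x y => hsymm x y⟩ hb hbpos (hspan hx)

/-- One half of Lemma A.1 (i): the index form `a` is negative definite on the span of the
set `E` of eigenvectors of `a` with negative eigenvalue relative to the scalar product
`⟨i·, i·⟩_V`. -/
theorem negative_definite_on_span_of_negative_eigenvectors
    {H V : Type*}
    [NormedAddCommGroup H] [InnerProductSpace ℝ H] [CompleteSpace H]
    [NormedAddCommGroup V] [InnerProductSpace ℝ V] [CompleteSpace V]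
    (i : H →L[ℝ] V) (hinj : Function.Injective i)
    (hcomp : IsCompactOperator (⇑i)) (hdense : DenseRange (⇑i))
    (a : H →L[ℝ] H →L[ℝ] ℝ) (hsymm : ∀ x y : H, a x y = a y x)
    (lam α : ℝ) (hlam : 0 < lam) (hα : 0 < α)
    (hcoer : ∀ x : H, α * ‖x‖ ^ 2 ≤ a x x + lam * (inner ℝ (i x) (i x) : ℝ)) :
    ∀ x ∈ Submodule.span ℝ
        {x : H | ∃ ρ : ℝ, ρ < 0 ∧ ∀ y : H, a x y = ρ * (inner ℝ (i x) (i y) : ℝ)},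
      x ≠ 0 → a x x < 0 :=
  negative_definite_on_span_of_negative_eigenvectors_general i hinj a hsymm
end

section
/- Let H and V be real Hilbert spaces, let i : H → V be an injective compact continuous linear map with dense range, let a : H × H → ℝ be a continuous symmetric bilinear form, and suppose there exist λ > 0 and α > 0 with a(x,x) + λ⟨i x, i x⟩_V ≥ α‖x‖_H² for all x ∈ H. Define E := { x ∈ H : there exists ρ < 0 such that a(x, y) = ρ ⟨i x, i y⟩_V for all y ∈ H }. Then the linear span of E is finite-dimensional. -/
/-!
Eigenvectors of `a` relative to `⟨i·, i·⟩_V` for distinct eigenvalues are orthogonal for both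
forms, so `a` is negative semidefinite on their span `S`. Coercivity then gives
`α ‖x‖² ≤ λ ‖i x‖²` on `S`. Thus the compact operator `i` is bounded below on `S`, so the unit
ball of `S` is totally bounded and Riesz's theorem makes `S` finite-dimensional.
-/

open LinearMap Submodule

namespace LinearMap.BilinForm

variable {R M : Type*} [Field R] [AddCommGroup M] [Module R M] {a b : LinearMap.BilinForm R M}

theorem mem_ker_sub_smul_iff {ρ : R} {x : M} :
    x ∈ ker (a - ρ • b) ↔ ∀ y, a x y = ρ * b x y := by
  simp only [mem_ker, LinearMap.ext_iff, sub_apply, smul_apply, smul_eq_mul,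
    LinearMap.zero_apply, sub_eq_zero]

theorem apply_eq_zero_of_mem_ker_sub_smul (ha : a.IsSymm) (hb : b.IsSymm) {ρ σ : R}
    (hρσ : ρ ≠ σ) {u v : M} (hu : u ∈ ker (a - ρ • b)) (hv : v ∈ ker (a - σ • b)) :
    a u v = 0 := by
  rw [mem_ker_sub_smul_iff] at hu hv
  have hb0 : b u v = 0 := by
    have h := hu v
    rw [ha.eq, hv u, hb.eq] at h
    exact (mul_eq_mul_right_iff.mp h).resolve_left hρσ.symm
  rw [hu v, hb0, mul_zero]

variable [LinearOrder R] [IsStrictOrderedRing R]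

theorem apply_self_nonpos_of_mem_iSup (ha : a.IsSymm) (hb : b.IsPosSemidef) {x : M}
    (hx : x ∈ ⨆ ρ : Set.Iio (0 : R), ker (a - (ρ : R) • b)) : a x x ≤ 0 := by
  obtain ⟨f, hf, rfl⟩ := (mem_iSup_iff_exists_finsupp _ x).mp hx
  have hoff : ∀ ρ σ, ρ ≠ σ → a (f ρ) (f σ) = 0 := fun ρ σ hρσ =>
    apply_eq_zero_of_mem_ker_sub_smul ha hb.isSymm (Subtype.coe_injective.ne hρσ) (hf ρ) (hf σ)
  simp only [Finsupp.sum, sum_left, sum_right]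
  refine Finset.sum_nonpos fun ρ _ => ?_
  rw [Finset.sum_eq_single ρ (fun σ _ hσρ => hoff σ ρ hσρ)
    (fun h => by simp [Finsupp.notMem_support_iff.mp h]), mem_ker_sub_smul_iff.mp (hf ρ) (f ρ)]
  exact mul_nonpos_of_nonpos_of_nonneg ρ.2.le (hb.isNonneg.nonneg _)

theorem apply_self_nonpos_of_mem_span (ha : a.IsSymm) (hb : b.IsPosSemidef) {x : M}
    (hx : x ∈ span R {x | ∃ ρ < 0, ∀ y, a x y = ρ * b x y}) : a x x ≤ 0 := by
  refine apply_self_nonpos_of_mem_iSup ha hb (span_le.mpr ?_ hx)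
  rintro x ⟨ρ, hρ, hxρ⟩
  exact mem_iSup_of_mem ⟨ρ, hρ⟩ (mem_ker_sub_smul_iff.mpr hxρ)

end LinearMap.BilinForm

theorem FiniteDimensional.of_isCompactOperator_of_isUniformInducing (𝕜 : Type*)
    [NontriviallyNormedField 𝕜] [CompleteSpace 𝕜] {E F : Type*} [AddCommGroup E] [Module 𝕜 E]
    [UniformSpace E] [T2Space E] [IsUniformAddGroup E] [ContinuousSMul 𝕜 E] [UniformSpace F]
    {f : E → F} (hf : IsCompactOperator f) (hfu : IsUniformInducing f) :
    FiniteDimensional 𝕜 E := by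
  obtain ⟨K, hK, hpre⟩ := hf
  exact .of_totallyBounded_nhds_zero 𝕜 hpre (totallyBounded_preimage hfu hK.totallyBounded)

theorem Submodule.finiteDimensional_of_norm_le_mul_norm {𝕜 E F : Type*}
    [NontriviallyNormedField 𝕜] [CompleteSpace 𝕜] [NormedAddCommGroup E] [NormedSpace 𝕜 E]
    [NormedAddCommGroup F] [NormedSpace 𝕜 F] {f : E →L[𝕜] F} (hf : IsCompactOperator f)
    (S : Submodule 𝕜 E) {C : NNReal} (hS : ∀ x ∈ S, ‖x‖ ≤ C * ‖f x‖) :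
    FiniteDimensional 𝕜 S :=
  .of_isCompactOperator_of_isUniformInducing 𝕜 (hf.comp_clm S.subtypeL)
    ((f.comp S.subtypeL).isUniformEmbedding_of_bound fun x => hS x x.2).isUniformInducing

theorem norm_le_sqrt_div_mul_norm {E F : Type*} [SeminormedAddCommGroup E]
    [SeminormedAddCommGroup F] {α β : ℝ} (hα : 0 < α) {x : E} {y : F}
    (h : α * ‖x‖ ^ 2 ≤ β * ‖y‖ ^ 2) : ‖x‖ ≤ √(β / α) * ‖y‖ := by
  rw [← Real.sqrt_sq (norm_nonneg x), ← Real.sqrt_sq (norm_nonneg y),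
    ← Real.sqrt_mul' _ (sq_nonneg _)]
  refine Real.sqrt_le_sqrt ?_
  rw [div_mul_eq_mul_div, le_div_iff₀ hα]
  linarith

theorem finite_dimensional_span_of_negative_eigenvectors_general
    {H V : Type*}
    [NormedAddCommGroup H] [InnerProductSpace ℝ H]
    [NormedAddCommGroup V] [InnerProductSpace ℝ V]
    (i : H →L[ℝ] V)
    (hcomp : IsCompactOperator (⇑i))
    (a : H →L[ℝ] H →L[ℝ] ℝ) (hsymm : ∀ x y : H, a x y = a y x)
    (lam α : ℝ) (hα : 0 < α)
    (hcoer : ∀ x : H, α * ‖x‖ ^ 2 ≤ a x x + lam * (inner ℝ (i x) (i x) : ℝ)) :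
    FiniteDimensional ℝ
      (Submodule.span ℝ
        {x : H | ∃ ρ : ℝ, ρ < 0 ∧ ∀ y : H, a x y = ρ * (inner ℝ (i x) (i y) : ℝ)}) := by
  let b : LinearMap.BilinForm ℝ H := (innerₗ V).compl₁₂ (i : H →ₗ[ℝ] V) i
  have hb : b.IsPosSemidef :=
    ⟨⟨fun x y => real_inner_comm _ _⟩, ⟨fun x => real_inner_self_nonneg⟩⟩
  have hneg : ∀ x ∈ span ℝ {x | ∃ ρ < 0, ∀ y, a x y = ρ * b x y}, a x x ≤ 0 := fun x hx =>
    LinearMap.BilinForm.apply_self_nonpos_of_mem_span (a := a.toLinearMap₁₂) ⟨hsymm⟩ hb hx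
  have hbound : ∀ x ∈ span ℝ {x | ∃ ρ < 0, ∀ y, a x y = ρ * b x y},
      α * ‖x‖ ^ 2 ≤ lam * ‖i x‖ ^ 2 := fun x hx => by
    have := hcoer x
    rw [real_inner_self_eq_norm_sq] at this
    linarith [hneg x hx]
  refine finiteDimensional_of_norm_le_mul_norm hcomp _
    (C := (√(lam / α)).toNNReal) fun x hx => ?_
  simpa [Real.coe_toNNReal _ (Real.sqrt_nonneg _)] using
    norm_le_sqrt_div_mul_norm hα (hbound x hx)

/-- The span of the set of eigenvectors of the index form `a` with negative eigenvalue
relative to the scalar product `⟨i·, i·⟩_V` is finite-dimensional: the index of `a` is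
finite (Appendix A of the paper). -/
theorem finite_dimensional_span_of_negative_eigenvectors
    {H V : Type*}
    [NormedAddCommGroup H] [InnerProductSpace ℝ H] [CompleteSpace H]
    [NormedAddCommGroup V] [InnerProductSpace ℝ V] [CompleteSpace V]
    (i : H →L[ℝ] V) (hinj : Function.Injective i)
    (hcomp : IsCompactOperator (⇑i)) (hdense : DenseRange (⇑i))
    (a : H →L[ℝ] H →L[ℝ] ℝ) (hsymm : ∀ x y : H, a x y = a y x)
    (lam α : ℝ) (hlam : 0 < lam) (hα : 0 < α)
    (hcoer : ∀ x : H, α * ‖x‖ ^ 2 ≤ a x x + lam * (inner ℝ (i x) (i x) : ℝ)) :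
    FiniteDimensional ℝ
      (Submodule.span ℝ
        {x : H | ∃ ρ : ℝ, ρ < 0 ∧ ∀ y : H, a x y = ρ * (inner ℝ (i x) (i y) : ℝ)}) :=
  finite_dimensional_span_of_negative_eigenvectors_general i hcomp a hsymm lam α hα hcoer
end
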